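/- arXiv:2504.00710 — 5 statements merged into one kernel-verified Lean document; each statement's English description precedes it below -/
import Mathlib

section
/- For any partition λ = (λ₁,…,λ_d) of N−1 with at most d nonzero parts, and any addable cell a of λ (i.e., a cell that can be added to λ to yield a valid partition with at most d rows), one has N · (d_λ / m_λ) · (m_{λ∪a} / d_{λ∪a}) = d + cont(a), where d_μ denotes the dimension of the symmetric-group irrep labeled by μ, m_μ denotes the dimension of the U(d) irrep labeled by μ (given by the Weyl dimension formula m_μ = ∏_{1≤i<j≤d} (μ_i − μ_j + j − i)/(j − i)), and cont((i,j)) := j − i is the content of cell (i,j). -/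
open Finset BigOperators

namespace PBT

/-- Partitions of `N` with at most `d` (nonzero) parts, encoded as antitone
functions `Fin d → ℕ` summing to `N`. -/
def Ptn (d N : ℕ) : Finset (Fin d → ℕ) :=
  (Fintype.piFinset fun _ => Finset.range (N + 1)).filter
    (fun lam => (∀ i j : Fin d, i ≤ j → lam j ≤ lam i) ∧ ∑ i, lam i = N)

/-- Weyl dimension formula for the `U(d)` irrep of highest weight `lam`. -/
def weylDim (d : ℕ) (lam : Fin d → ℕ) : ℚ :=
  ∏ p ∈ Finset.univ.filter (fun p : Fin d × Fin d => p.1 < p.2),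
    (((lam p.1 : ℚ) - (lam p.2 : ℚ)) + (p.2.1 : ℚ) - (p.1.1 : ℚ)) / ((p.2.1 : ℚ) - (p.1.1 : ℚ))

/-- Add a cell in row `i`. -/
def addCell {d : ℕ} (lam : Fin d → ℕ) (i : Fin d) : Fin d → ℕ :=
  Function.update lam i (lam i + 1)

/-- Remove a cell in row `i`. -/
def removeCell {d : ℕ} (lam : Fin d → ℕ) (i : Fin d) : Fin d → ℕ :=
  Function.update lam i (lam i - 1)

/-- Rows where a cell can be added keeping a valid partition with at most `d` rows. -/
def AC (d : ℕ) (lam : Fin d → ℕ) : Finset (Fin d) :=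
  Finset.univ.filter (fun i => ∀ j : Fin d, j < i → lam i < lam j)

/-- Rows where a cell can be removed keeping a valid partition. -/
def RC (d : ℕ) (lam : Fin d → ℕ) : Finset (Fin d) :=
  Finset.univ.filter (fun i => 0 < lam i ∧ ∀ j : Fin d, i < j → lam j < lam i)

/-- Content of the addable cell in row `i`: `(lam i + 1) - (i + 1) = lam i - i`. -/
def contA {d : ℕ} (lam : Fin d → ℕ) (i : Fin d) : ℤ := (lam i : ℤ) - (i : ℤ)

/-- Fuel-based count of standard Young tableaux via the branching rule. -/
def sytAux (d : ℕ) : ℕ → (Fin d → ℕ) → ℕ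
  | 0, _ => 1
  | n + 1, lam => ∑ i ∈ RC d lam, sytAux d n (removeCell lam i)

/-- The number of standard Young tableaux of shape `lam` (dimension of the
symmetric-group irrep labelled by `lam`). -/
def syt {d : ℕ} (lam : Fin d → ℕ) : ℕ := sytAux d (∑ i, lam i) lam

end PBT

open Matrix BigOperators Finset Polynomial

lemma sum_det_updateRow {d : ℕ} (M A : Matrix (Fin d) (Fin d) ℚ) :
    ∑ i, (M.updateRow i (fun k => ∑ m, M i m * A m k)).det = A.trace * M.det := by
  have h1 : ∀ i : Fin d, (M.updateRow i (fun k => ∑ m, M i m * A m k)).det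
      = ∑ m, M i m * cramer Mᵀ (A m) i := by
    intro i
    rw [← cramer_transpose_apply]
    have : (fun k => ∑ m, M i m * A m k) = ∑ m, M i m • (A m) := by
      funext k; simp [Finset.sum_apply]
    rw [this, map_sum]
    simp [Finset.sum_apply]
  simp_rw [h1, cramer_eq_adjugate_mulVec, ← adjugate_transpose, mulVec, dotProduct,
    transpose_apply]
  rw [Finset.sum_comm]
  have h2 : ∀ m, ∑ i, M i m * ∑ k, adjugate M k i * A m k
      = ∑ k, A m k * (adjugate M * M) k m := by
    intro m
    simp_rw [Finset.mul_sum, Matrix.mul_apply]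
    rw [Finset.sum_comm]
    congr 1; funext k
    rw [Finset.mul_sum]
    congr 1; funext i; ring
  simp_rw [h2, adjugate_mul, Matrix.smul_apply, Matrix.one_apply, Matrix.trace, Matrix.diag]
  rw [Finset.sum_comm]
  simp [Finset.mul_sum, mul_comm]

lemma UI' {d : ℕ} (hd : 1 ≤ d) (l : Fin d → ℚ) :
    ∑ i, l i * (vandermonde (Function.update l i (l i - 1))).det
    = ((∑ i, l i) - ∑ i : Fin d, ((i:ℕ) : ℚ)) * (vandermonde l).det := by
  set M := vandermonde l with hM
  set q : Fin d → ℚ[X] := fun k =>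
    X * (X - C 1) ^ (k : ℕ) - (if (k : ℕ) = d - 1 then ∏ j, (X - C (l j)) else 0) with hq
  set A : Matrix (Fin d) (Fin d) ℚ := Matrix.of (fun m k => (q k).coeff m) with hA
  have hmonX : ∀ k : ℕ, (X * (X - C 1 : ℚ[X]) ^ k).Monic := fun k =>
    monic_X.mul ((monic_X_sub_C (1:ℚ)).pow k)
  have hdegX : ∀ k : ℕ, (X * (X - C 1 : ℚ[X]) ^ k).natDegree = k + 1 := by
    intro k
    rw [natDegree_mul X_ne_zero (pow_ne_zero _ (monic_X_sub_C (1:ℚ)).ne_zero),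
      natDegree_X, natDegree_pow, natDegree_X_sub_C]
    ring
  have hprodmon : (∏ j, (X - C (l j)) : ℚ[X]).Monic :=
    monic_prod_of_monic _ _ fun j _ => monic_X_sub_C _
  have hproddeg : (∏ j, (X - C (l j)) : ℚ[X]).natDegree = d := by
    rw [natDegree_prod _ _ (fun j _ => (monic_X_sub_C (l j)).ne_zero)]
    simp [natDegree_X_sub_C]
  have hqdeg : ∀ k : Fin d, (q k).natDegree < d := by
    intro k
    by_cases hk : (k : ℕ) = d - 1
    · have h1 : (X * (X - C 1 : ℚ[X]) ^ (k:ℕ)).natDegree = d := by rw [hdegX]; omega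
      have hqk : q k = X * (X - C 1 : ℚ[X]) ^ (k:ℕ) - ∏ j, (X - C (l j)) := by
        rw [hq]; simp only [if_pos hk]
      have hdlt : (q k).degree < (X * (X - C 1 : ℚ[X]) ^ (k:ℕ)).degree := by
        rw [hqk]
        apply degree_sub_lt
        · rw [degree_eq_natDegree (hmonX _).ne_zero, degree_eq_natDegree hprodmon.ne_zero,
            h1, hproddeg]
        · exact (hmonX _).ne_zero
        · rw [(hmonX _).leadingCoeff, hprodmon.leadingCoeff]
      rw [degree_eq_natDegree (hmonX (k:ℕ)).ne_zero, h1] at hdlt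
      by_cases h0 : q k = 0
      · rw [h0]; simpa using (show 0 < d by omega)
      · exact (natDegree_lt_iff_degree_lt h0).mpr hdlt
    · have : (q k) = X * (X - C 1 : ℚ[X]) ^ (k:ℕ) := by rw [hq]; simp [hk]
      rw [this, hdegX]
      have := k.isLt; omega
  have hrow : ∀ i : Fin d, (fun k : Fin d => l i * (l i - 1) ^ (k : ℕ))
      = fun k => ∑ m, M i m * A m k := by
    intro i
    funext k
    have heval : (q k).eval (l i) = l i * (l i - 1) ^ (k : ℕ) := by
      rw [hq]
      simp only [eval_sub, eval_mul, eval_pow, eval_X, eval_one, eval_C]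
      have : eval (l i) (if (k : ℕ) = d - 1 then ∏ j, (X - C (l j)) else 0) = 0 := by
        split
        · rw [eval_prod]
          apply Finset.prod_eq_zero (Finset.mem_univ i)
          simp
        · simp
      rw [this]; ring_nf
    rw [eval_eq_sum_range' (hqdeg k) (l i)] at heval
    rw [← heval, ← Fin.sum_univ_eq_sum_range (fun m => (q k).coeff m * l i ^ m) d]
    congr 1
    funext m
    simp [hM, vandermonde, hA, mul_comm]
  have hstep : ∀ i : Fin d, l i * (vandermonde (Function.update l i (l i - 1))).det
      = (M.updateRow i (fun k => ∑ m, M i m * A m k)).det := by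
    intro i
    have hv : vandermonde (Function.update l i (l i - 1))
        = M.updateRow i (fun k => (l i - 1) ^ (k : ℕ)) := by
      ext j k
      by_cases hj : j = i
      · subst hj; simp [vandermonde, Matrix.updateRow_self]
      · simp [vandermonde, Matrix.updateRow_ne hj, Function.update_of_ne hj, hM]
    have hsm : (l i • fun k : Fin d => (l i - 1) ^ (k:ℕ)) = fun k : Fin d => l i * (l i - 1) ^ (k:ℕ) := by
      funext k; simp
    rw [hv, ← hrow i, ← hsm, Matrix.det_updateRow_smul]
  simp_rw [hstep]
  rw [sum_det_updateRow]
  congr 1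
  -- trace A = ∑ l - ∑ i
  have htr : ∀ k : Fin d, A k k = -(k:ℚ) + (if (k:ℕ) = d - 1 then ∑ j, l j else 0) := by
    intro k
    have hcoeff1 : (X * (X - C 1 : ℚ[X]) ^ (k:ℕ)).coeff k = -(k:ℚ) := by
      rcases Nat.eq_zero_or_pos (k:ℕ) with h0 | hpos
      · rw [h0]; simp
      · obtain ⟨k', hk'⟩ : ∃ k', (k:ℕ) = k' + 1 := ⟨(k:ℕ) - 1, by omega⟩
        rw [hk', coeff_X_mul]
        have hn : ((X - C 1 : ℚ[X]) ^ (k' + 1)).natDegree = k' + 1 := by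
          rw [natDegree_pow, natDegree_X_sub_C, mul_one]
        have h2 := Monic.nextCoeff_pow (monic_X_sub_C (1:ℚ)) (k' + 1)
        rw [nextCoeff_of_natDegree_pos (by rw [hn]; omega), hn] at h2
        rw [nextCoeff_X_sub_C] at h2
        simp only [add_tsub_cancel_right] at h2
        rw [h2]
        push_cast
        ring
    have hcoeff2 : (∏ j, (X - C (l j)) : ℚ[X]).coeff (d - 1) = -∑ j, l j := by
      have := Monic.nextCoeff_prod Finset.univ (fun j => X - C (l j))
        (fun j _ => monic_X_sub_C (l j))
      rw [nextCoeff_of_natDegree_pos (by rw [hproddeg]; omega), hproddeg] at this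
      simp only [nextCoeff_X_sub_C] at this
      rw [this, Finset.sum_neg_distrib]
    rw [hA]
    simp only [Matrix.of_apply, hq, coeff_sub]
    by_cases hk : (k:ℕ) = d - 1
    · rw [if_pos hk, if_pos hk, hcoeff1]
      simp only [hk]
      rw [hcoeff2]
      push_cast [hk]
      ring
    · rw [if_neg hk, if_neg hk, hcoeff1, coeff_zero]; ring
  rw [Matrix.trace]
  simp_rw [Matrix.diag]
  rw [Finset.sum_congr rfl (fun k _ => htr k), Finset.sum_add_distrib]
  have hiff : ∀ x : Fin d, ((x:ℕ) = d - 1) = (x = (⟨d-1, by omega⟩ : Fin d)) := by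
    intro x; rw [Fin.ext_iff]
  simp_rw [hiff]
  rw [Finset.sum_ite_eq' Finset.univ (⟨d-1, by omega⟩ : Fin d) (fun _ => ∑ j, l j)]
  simp only [Finset.mem_univ, if_pos]
  rw [Finset.sum_neg_distrib]
  ring


section Aux
variable {d : ℕ}

/-- hook-content style product -/
def hcp (d : ℕ) (lam : Fin d → ℕ) : ℚ := ∏ i, ∏ j ∈ Finset.range (lam i), ((d:ℚ) + j - i)

lemma hcp_pos (lam : Fin d → ℕ) : 0 < hcp d lam := by
  apply Finset.prod_pos; intro i _
  apply Finset.prod_pos; intro j _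
  have hi : ((i:ℕ):ℚ) < d := by exact_mod_cast i.isLt
  have hj : (0:ℚ) ≤ (j:ℚ) := by positivity
  linarith

lemma weylDim_Ioi (lam : Fin d → ℕ) :
    PBT.weylDim d lam
      = ∏ i, ∏ j ∈ Finset.Ioi i,
          ((((lam i:ℚ) - (lam j:ℚ)) + ((j:ℕ):ℚ) - ((i:ℕ):ℚ)) / (((j:ℕ):ℚ) - ((i:ℕ):ℚ))) := by
  rw [PBT.weylDim, Finset.prod_filter, Fintype.prod_prod_type]
  congr 1
  funext i
  rw [← Finset.filter_lt_eq_Ioi, Finset.prod_filter]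

lemma weylDim_mul (lam : Fin d → ℕ) :
    PBT.weylDim d lam * (vandermonde (fun i : Fin d => (d:ℚ) - 1 - ((i:ℕ):ℚ))).det
      = (vandermonde (fun i : Fin d => (lam i : ℚ) + d - 1 - ((i:ℕ):ℚ))).det := by
  rw [weylDim_Ioi, det_vandermonde, det_vandermonde, ← Finset.prod_mul_distrib]
  apply Finset.prod_congr rfl
  intro i _
  rw [← Finset.prod_mul_distrib]
  apply Finset.prod_congr rfl
  intro j hj
  have hij0 : i < j := Finset.mem_Ioi.mp hj
  have hij : (i:ℕ) < (j:ℕ) := hij0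
  have hij' : ((i:ℕ):ℚ) < ((j:ℕ):ℚ) := by exact_mod_cast hij
  have hne : ((j:ℕ):ℚ) - ((i:ℕ):ℚ) ≠ 0 := by linarith
  field_simp
  ring

lemma vandermonde_delta_ne_zero (hd : 1 ≤ d) :
    (vandermonde (fun i : Fin d => (d:ℚ) - 1 - ((i:ℕ):ℚ))).det ≠ 0 := by
  rw [det_vandermonde_ne_zero_iff]
  intro i j hij
  have : ((i:ℕ):ℚ) = ((j:ℕ):ℚ) := by
    have := hij
    simp only [sub_right_injective] at this
    linarith [this]
  have : (i:ℕ) = (j:ℕ) := by exact_mod_cast this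
  exact Fin.ext this

lemma weylDim_pos (lam : Fin d → ℕ) (hmono : ∀ i j : Fin d, i ≤ j → lam j ≤ lam i) :
    0 < PBT.weylDim d lam := by
  rw [weylDim_Ioi]
  apply Finset.prod_pos; intro i _
  apply Finset.prod_pos; intro j hj
  have hij0 : i < j := Finset.mem_Ioi.mp hj
  have hij : (i:ℕ) < (j:ℕ) := hij0
  have hle : lam j ≤ lam i := hmono i j (le_of_lt hij0)
  have h1 : ((i:ℕ):ℚ) < ((j:ℕ):ℚ) := by exact_mod_cast hij
  have h2 : (lam j : ℚ) ≤ (lam i : ℚ) := by exact_mod_cast hle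
  apply div_pos <;> linarith

end Aux

lemma Lq_update (lam : Fin d → ℕ) (i : Fin d) (hpos : 0 < lam i) :
    (fun t : Fin d => (PBT.removeCell lam i t : ℚ) + d - 1 - ((t:ℕ):ℚ))
      = Function.update (fun t : Fin d => (lam t : ℚ) + d - 1 - ((t:ℕ):ℚ)) i
          (((lam i : ℚ) + d - 1 - ((i:ℕ):ℚ)) - 1) := by
  funext t
  by_cases ht : t = i
  · subst ht
    rw [Function.update_self, PBT.removeCell, Function.update_self]
    have h1 : ((lam t - 1 : ℕ) : ℚ) = (lam t : ℚ) - 1 := by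
      rw [Nat.cast_sub hpos]; norm_num
    rw [h1]; ring
  · rw [Function.update_of_ne ht, PBT.removeCell, Function.update_of_ne ht]

lemma sum_delta_eq : ∑ i : Fin d, ((d:ℚ) - 1 - ((i:ℕ):ℚ)) = ∑ i : Fin d, ((i:ℕ):ℚ) := by
  apply Fintype.sum_equiv (Fin.revPerm)
  intro i
  have h1 : ((Fin.revPerm i : Fin d) : ℕ) = d - ((i:ℕ) + 1) := Fin.val_rev i
  rw [h1]
  have h2 : (i:ℕ) + 1 ≤ d := i.isLt
  push_cast [Nat.cast_sub h2]
  ring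

lemma BI (hd : 1 ≤ d) (lam : Fin d → ℕ)
    (hmono : ∀ i j : Fin d, i ≤ j → lam j ≤ lam i) :
    ∑ i ∈ PBT.RC d lam,
        ((d:ℚ) + (lam i:ℚ) - 1 - ((i:ℕ):ℚ)) * PBT.weylDim d (PBT.removeCell lam i)
      = (∑ i, (lam i:ℚ)) * PBT.weylDim d lam := by
  set L : Fin d → ℚ := fun t => (lam t : ℚ) + d - 1 - ((t:ℕ):ℚ) with hL
  have hDne := vandermonde_delta_ne_zero (d := d) hd
  apply mul_right_cancel₀ hDne
  rw [Finset.sum_mul]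
  have hterm : ∀ i ∈ PBT.RC d lam,
      ((d:ℚ) + (lam i:ℚ) - 1 - ((i:ℕ):ℚ)) * PBT.weylDim d (PBT.removeCell lam i)
          * (vandermonde (fun i : Fin d => (d:ℚ) - 1 - ((i:ℕ):ℚ))).det
        = L i * (vandermonde (Function.update L i (L i - 1))).det := by
    intro i hi
    have hpos : 0 < lam i := ((Finset.mem_filter.mp hi).2).1
    rw [mul_assoc, weylDim_mul, Lq_update lam i hpos]
    congr 1
    · rw [hL]; ring
  rw [Finset.sum_congr rfl hterm]
  have hext : ∑ i ∈ PBT.RC d lam, L i * (vandermonde (Function.update L i (L i - 1))).det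
      = ∑ i, L i * (vandermonde (Function.update L i (L i - 1))).det := by
    apply Finset.sum_subset (Finset.subset_univ _)
    intro i _ hi
    rw [PBT.RC, Finset.mem_filter] at hi
    push_neg at hi
    have hi' := hi (Finset.mem_univ i)
    by_cases hz : lam i = 0
    · by_cases hlast : (i:ℕ) = d - 1
      · have hLi : L i = 0 := by
          have hcast : ((d - 1 : ℕ):ℚ) = (d:ℚ) - 1 := by
            rw [Nat.cast_sub hd]; norm_num
          rw [hL]; simp only [hz, hlast, hcast, Nat.cast_zero]
          ring
        rw [hLi, zero_mul]
      · -- i' = i+1 row, lam i' = 0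
        have hlt : (i:ℕ) + 1 < d := by have := i.isLt; omega
        have : (vandermonde (Function.update L i (L i - 1))).det = 0 := by
          rw [det_vandermonde_eq_zero_iff]
          refine ⟨i, ⟨(i:ℕ)+1, hlt⟩, ?_, ?_⟩
          · rw [Function.update_self, Function.update_of_ne (by
              intro h; exact absurd (congrArg Fin.val h) (by simp)), hL]
            simp only [hz]
            have : lam ⟨(i:ℕ)+1, hlt⟩ = 0 := by
              have := hmono i ⟨(i:ℕ)+1, hlt⟩ (by
                rw [Fin.le_def]; simp)
              omega
            rw [this]
            push_cast
            ring
          · intro h; exact absurd (congrArg Fin.val h) (by simp)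
        rw [this, mul_zero]
    · -- lam i > 0, so second clause fails
      obtain ⟨j, hij, hji⟩ := hi' (Nat.pos_of_ne_zero hz)
      have hlt : (i:ℕ) + 1 < d := by
        have h1 : (i:ℕ) < (j:ℕ) := hij
        have := j.isLt; omega
      have heq : lam ⟨(i:ℕ)+1, hlt⟩ = lam i := by
        have ha := hmono i ⟨(i:ℕ)+1, hlt⟩ (by rw [Fin.le_def]; simp)
        have hb := hmono ⟨(i:ℕ)+1, hlt⟩ j (by
          rw [Fin.le_def]
          have h1 : (i:ℕ) < (j:ℕ) := hij
          simp only [Fin.val_mk]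
          omega)
        omega
      have : (vandermonde (Function.update L i (L i - 1))).det = 0 := by
        rw [det_vandermonde_eq_zero_iff]
        refine ⟨i, ⟨(i:ℕ)+1, hlt⟩, ?_, ?_⟩
        · rw [Function.update_self, Function.update_of_ne (by
            intro h; exact absurd (congrArg Fin.val h) (by simp))]
          simp only [hL, heq, Fin.val_mk]
          push_cast
          ring
        · intro h; exact absurd (congrArg Fin.val h) (by simp)
      rw [this, mul_zero]
  rw [hext, UI' hd]
  have hsum : (∑ i, L i) - ∑ i : Fin d, ((i:ℕ):ℚ) = ∑ i, (lam i : ℚ) := by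
    rw [hL]
    have : ∑ t : Fin d, ((lam t : ℚ) + d - 1 - ((t:ℕ):ℚ))
        = ∑ t : Fin d, (lam t : ℚ) + ∑ t : Fin d, ((d:ℚ) - 1 - ((t:ℕ):ℚ)) := by
      rw [← Finset.sum_add_distrib]
      apply Finset.sum_congr rfl; intro t _; ring
    rw [this, sum_delta_eq]
    ring
  rw [hsum, mul_assoc, weylDim_mul]

lemma mem_Ptn {N : ℕ} {lam : Fin d → ℕ} :
    lam ∈ PBT.Ptn d N ↔ (∀ i, lam i ≤ N)
      ∧ (∀ i j : Fin d, i ≤ j → lam j ≤ lam i) ∧ ∑ i, lam i = N := by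
  rw [PBT.Ptn, Finset.mem_filter, Fintype.mem_piFinset]
  simp [Nat.lt_succ_iff, and_assoc]

lemma removeCell_sum (lam : Fin d → ℕ) (i : Fin d) (hpos : 0 < lam i) {n : ℕ}
    (hsum : ∑ t, lam t = n + 1) : ∑ t, PBT.removeCell lam i t = n := by
  rw [PBT.removeCell, Finset.sum_update_of_mem (Finset.mem_univ i),
    Finset.sdiff_singleton_eq_erase]
  rw [← Finset.add_sum_erase Finset.univ lam (Finset.mem_univ i)] at hsum
  omega

lemma removeCell_mem_Ptn {n : ℕ} (lam : Fin d → ℕ) (i : Fin d)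
    (hlam : lam ∈ PBT.Ptn d (n + 1)) (hi : i ∈ PBT.RC d lam) :
    PBT.removeCell lam i ∈ PBT.Ptn d n := by
  obtain ⟨hbd, hmono, hsum⟩ := mem_Ptn.mp hlam
  obtain ⟨hpos, hdec⟩ := (Finset.mem_filter.mp hi).2
  rw [mem_Ptn]
  refine ⟨?_, ?_, removeCell_sum lam i hpos hsum⟩
  · intro t
    by_cases ht : t = i
    · subst ht
      rw [PBT.removeCell, Function.update_self]
      have := hbd t; omega
    · rw [PBT.removeCell, Function.update_of_ne ht]
      have h1 : lam t ≤ ∑ x ∈ Finset.univ.erase i, lam x :=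
        Finset.single_le_sum (fun x _ => Nat.zero_le _) (Finset.mem_erase.mpr ⟨ht, Finset.mem_univ t⟩)
      rw [← Finset.add_sum_erase Finset.univ lam (Finset.mem_univ i)] at hsum
      omega
  · intro s t hst
    rw [PBT.removeCell]
    by_cases hs : s = i <;> by_cases ht : t = i
    · subst hs; rw [ht]
    · subst hs
      rw [Function.update_self, Function.update_of_ne ht]
      rcases eq_or_lt_of_le hst with h | h
      · exact absurd h.symm ht
      · have := hdec t h; omega
    · subst ht
      rw [Function.update_self, Function.update_of_ne hs]
      have := hmono s t hst; omega
    · rw [Function.update_of_ne hs, Function.update_of_ne ht]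
      exact hmono s t hst

lemma hcp_removeCell (lam : Fin d → ℕ) (i : Fin d) (hpos : 0 < lam i) :
    hcp d lam = hcp d (PBT.removeCell lam i) * ((d:ℚ) + (lam i : ℚ) - 1 - ((i:ℕ):ℚ)) := by
  have hrow : ∀ t : Fin d, (∏ j ∈ Finset.range (PBT.removeCell lam i t), ((d:ℚ) + j - ((t:ℕ):ℚ)))
      = Function.update (fun t : Fin d => ∏ j ∈ Finset.range (lam t), ((d:ℚ) + j - ((t:ℕ):ℚ))) i
          (∏ j ∈ Finset.range (lam i - 1), ((d:ℚ) + j - ((i:ℕ):ℚ))) t := by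
    intro t
    by_cases ht : t = i
    · subst ht; rw [PBT.removeCell, Function.update_self, Function.update_self]
    · rw [PBT.removeCell, Function.update_of_ne ht, Function.update_of_ne ht]
  rw [hcp, hcp, Finset.prod_congr rfl (fun t _ => hrow t),
    Finset.prod_update_of_mem (Finset.mem_univ i)]
  have hsplit : ∏ j ∈ Finset.range (lam i), ((d:ℚ) + j - ((i:ℕ):ℚ))
      = (∏ j ∈ Finset.range (lam i - 1), ((d:ℚ) + j - ((i:ℕ):ℚ)))
          * ((d:ℚ) + ((lam i - 1 : ℕ):ℚ) - ((i:ℕ):ℚ)) := by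
    conv_lhs => rw [show lam i = (lam i - 1) + 1 by omega]
    rw [Finset.prod_range_succ]
  have hcast : ((lam i - 1 : ℕ):ℚ) = (lam i : ℚ) - 1 := by
    rw [Nat.cast_sub hpos]; norm_num
  rw [Finset.sdiff_singleton_eq_erase,
    ← Finset.mul_prod_erase Finset.univ
      (fun t : Fin d => ∏ j ∈ Finset.range (lam t), ((d:ℚ) + j - ((t:ℕ):ℚ)))
      (Finset.mem_univ i), hsplit, hcast]
  ring

lemma KL (hd : 1 ≤ d) : ∀ n : ℕ, ∀ lam : Fin d → ℕ, lam ∈ PBT.Ptn d n →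
    (PBT.syt lam : ℚ) * hcp d lam = (n.factorial : ℚ) * PBT.weylDim d lam := by
  intro n
  induction n with
  | zero =>
    intro lam hlam
    obtain ⟨hbd, hmono, hsum⟩ := mem_Ptn.mp hlam
    have hz : ∀ i, lam i = 0 := by
      intro i; have := hbd i; omega
    have h1 : PBT.syt lam = 1 := by rw [PBT.syt, hsum]; rfl
    have h2 : hcp d lam = 1 := by
      rw [hcp]; apply Finset.prod_eq_one; intro i _; rw [hz i]; simp
    have h3 : PBT.weylDim d lam = 1 := by
      rw [weylDim_Ioi]
      apply Finset.prod_eq_one; intro i _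
      apply Finset.prod_eq_one; intro j hj
      have hij : i < j := Finset.mem_Ioi.mp hj
      have hij' : (i:ℕ) < (j:ℕ) := hij
      have hne : ((j:ℕ):ℚ) - ((i:ℕ):ℚ) ≠ 0 := by
        have : ((i:ℕ):ℚ) < ((j:ℕ):ℚ) := by exact_mod_cast hij'
        linarith
      rw [hz i, hz j]
      norm_num
      exact hne
    rw [h1, h2, h3]
    norm_num [Nat.factorial]
  | succ n ih =>
    intro lam hlam
    obtain ⟨hbd, hmono, hsum⟩ := mem_Ptn.mp hlam
    have hsyt : (PBT.syt lam : ℚ) = ∑ i ∈ PBT.RC d lam, (PBT.syt (PBT.removeCell lam i) : ℚ) := by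
      rw [PBT.syt, hsum]
      rw [show PBT.sytAux d (n+1) lam = ∑ i ∈ PBT.RC d lam, PBT.sytAux d n (PBT.removeCell lam i) from rfl]
      push_cast
      apply Finset.sum_congr rfl
      intro i hi
      obtain ⟨hpos, _⟩ := (Finset.mem_filter.mp hi).2
      rw [PBT.syt, removeCell_sum lam i hpos hsum]
    rw [hsyt, Finset.sum_mul]
    have hterm : ∀ i ∈ PBT.RC d lam,
        (PBT.syt (PBT.removeCell lam i) : ℚ) * hcp d lam
          = (n.factorial : ℚ) * (((d:ℚ) + (lam i:ℚ) - 1 - ((i:ℕ):ℚ))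
              * PBT.weylDim d (PBT.removeCell lam i)) := by
      intro i hi
      obtain ⟨hpos, _⟩ := (Finset.mem_filter.mp hi).2
      rw [hcp_removeCell lam i hpos, ← mul_assoc,
        ih (PBT.removeCell lam i) (removeCell_mem_Ptn lam i hlam hi)]
      ring
    rw [Finset.sum_congr rfl hterm, ← Finset.mul_sum, BI hd lam hmono]
    have hs : (∑ i, (lam i : ℚ)) = ((n:ℚ) + 1) := by
      rw [← Nat.cast_sum, hsum]
      push_cast
      ring
    rw [hs, Nat.factorial_succ]
    push_cast
    ring

lemma addCell_mem_Ptn {n : ℕ} (lam : Fin d → ℕ) (a : Fin d)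
    (hlam : lam ∈ PBT.Ptn d n) (ha : a ∈ PBT.AC d lam) :
    PBT.addCell lam a ∈ PBT.Ptn d (n + 1) := by
  obtain ⟨hbd, hmono, hsum⟩ := mem_Ptn.mp hlam
  have hAC : ∀ j : Fin d, j < a → lam a < lam j := (Finset.mem_filter.mp ha).2
  rw [mem_Ptn]
  refine ⟨?_, ?_, ?_⟩
  · intro t
    by_cases ht : t = a
    · subst ht
      rw [PBT.addCell, Function.update_self]
      have : lam t ≤ ∑ i, lam i :=
        Finset.single_le_sum (fun x _ => Nat.zero_le _) (Finset.mem_univ t)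
      omega
    · rw [PBT.addCell, Function.update_of_ne ht]; have := hbd t; omega
  · intro s t hst
    rw [PBT.addCell]
    by_cases hs : s = a <;> by_cases ht : t = a
    · subst hs; rw [ht]
    · subst hs
      rw [Function.update_self, Function.update_of_ne ht]
      have := hmono s t hst
      omega
    · subst ht
      rw [Function.update_self, Function.update_of_ne hs]
      have hlt : s < t := lt_of_le_of_ne hst (by intro h; exact hs h)
      have := hAC s hlt
      omega
    · rw [Function.update_of_ne hs, Function.update_of_ne ht]
      exact hmono s t hst
  · rw [PBT.addCell, Finset.sum_update_of_mem (Finset.mem_univ a),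
      Finset.sdiff_singleton_eq_erase]
    rw [← Finset.add_sum_erase Finset.univ lam (Finset.mem_univ a)] at hsum
    omega


/-- For a partition `lam ⊢_d N-1` and an addable cell `a`,
`N · (d_λ / m_λ) · (m_{λ∪a} / d_{λ∪a}) = d + cont(a)`. -/
theorem stmt0 (d N : ℕ) (hd : 1 ≤ d) (hN : 1 ≤ N)
    (lam : Fin d → ℕ) (hlam : lam ∈ PBT.Ptn d (N - 1))
    (a : Fin d) (ha : a ∈ PBT.AC d lam) :
    (N : ℚ) * ((PBT.syt lam : ℚ) / PBT.weylDim d lam) *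
      (PBT.weylDim d (PBT.addCell lam a) / (PBT.syt (PBT.addCell lam a) : ℚ)) =
    (d : ℚ) + (PBT.contA lam a : ℚ) := by
  have hn : N - 1 + 1 = N := by omega
  obtain ⟨hbd, hmono, hsum⟩ := mem_Ptn.mp hlam
  have hmu : PBT.addCell lam a ∈ PBT.Ptn d (N - 1 + 1) := addCell_mem_Ptn lam a hlam ha
  obtain ⟨hbd', hmono', hsum'⟩ := mem_Ptn.mp hmu
  have E1 := KL hd (N - 1) lam hlam
  have E2 := KL hd (N - 1 + 1) (PBT.addCell lam a) hmu
  rw [hn] at E2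
  have hwD : 0 < PBT.weylDim d lam := weylDim_pos lam hmono
  have hwD' : 0 < PBT.weylDim d (PBT.addCell lam a) := weylDim_pos _ hmono'
  have hhcp := hcp_pos (d := d) lam
  have hhcp' := hcp_pos (d := d) (PBT.addCell lam a)
  have hfa : (0:ℚ) < ((N-1).factorial : ℚ) := by exact_mod_cast (N-1).factorial_pos
  have hfb : (0:ℚ) < (N.factorial : ℚ) := by exact_mod_cast N.factorial_pos
  have hsytmu : (0:ℚ) < (PBT.syt (PBT.addCell lam a) : ℚ) := by
    by_contra h
    push_neg at h
    have h0 : (PBT.syt (PBT.addCell lam a) : ℚ) = 0 :=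
      le_antisymm h (Nat.cast_nonneg _)
    rw [h0, zero_mul] at E2
    have : (0:ℚ) < (N.factorial : ℚ) * PBT.weylDim d (PBT.addCell lam a) := by positivity
    linarith
  have h0 : PBT.removeCell (PBT.addCell lam a) a = lam := by
    funext t
    by_cases ht : t = a
    · subst ht
      rw [PBT.removeCell, PBT.addCell]
      simp
    · rw [PBT.removeCell, Function.update_of_ne ht, PBT.addCell, Function.update_of_ne ht]
  have hcpmu : hcp d (PBT.addCell lam a)
      = hcp d lam * ((d:ℚ) + (lam a:ℚ) - ((a:ℕ):ℚ)) := by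
    have h1 := hcp_removeCell (PBT.addCell lam a) a (by rw [PBT.addCell]; simp)
    rw [h0] at h1
    rw [h1, PBT.addCell, Function.update_self]
    push_cast
    ring
  have hfact : (N.factorial : ℚ) = (N:ℚ) * ((N-1).factorial : ℚ) := by
    conv_lhs => rw [← hn]
    rw [Nat.factorial_succ]
    push_cast [hn]
    ring
  have hcontA : ((PBT.contA lam a : ℤ):ℚ) = (lam a : ℚ) - ((a:ℕ):ℚ) := by
    rw [PBT.contA]; push_cast; ring
  have h1 : (PBT.syt lam : ℚ) = ((N-1).factorial : ℚ) * PBT.weylDim d lam / hcp d lam := by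
    rw [eq_div_iff (ne_of_gt hhcp)]; exact E1
  have h2 : (PBT.syt (PBT.addCell lam a) : ℚ)
      = (N.factorial : ℚ) * PBT.weylDim d (PBT.addCell lam a) / hcp d (PBT.addCell lam a) := by
    rw [eq_div_iff (ne_of_gt hhcp')]; exact E2
  rw [hcontA, h1, h2, hcpmu, hfact]
  field_simp
  ring
end

section
/- The sum of squares of Weyl dimensions over partitions of N with at most d parts satisfies Σ_{μ ⊢_d N} m_μ² = C(N + d² − 1, d² − 1), where m_μ = ∏_{1≤i<j≤d} (μ_i − μ_j + j − i)/(j − i) and C denotes the binomial coefficient. -/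
open Finset BigOperators

open Finset Polynomial PBT

namespace PBTaux


variable {ι : Type*} [DecidableEq ι]

omit [DecidableEq ι] in
lemma monic_prodXC (s : Finset ι) (r : ι → ℚ) : (∏ i ∈ s, (X - C (r i))).Monic :=
  monic_prod_of_monic _ _ (fun i _ => monic_X_sub_C (r i))

omit [DecidableEq ι] in
lemma natDegree_prodXC (s : Finset ι) (r : ι → ℚ) :
    (∏ i ∈ s, (X - C (r i))).natDegree = s.card := by
  rw [natDegree_prod]
  · simp [natDegree_X_sub_C]
  · intro i _; exact X_sub_C_ne_zero (r i)

omit [DecidableEq ι] in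
lemma top_prodXC (s : Finset ι) (r : ι → ℚ) :
    (∏ i ∈ s, (X - C (r i))).coeff s.card = 1 := by
  have := (monic_prodXC s r).coeff_natDegree
  rwa [natDegree_prodXC] at this

omit [DecidableEq ι] in
lemma high_prodXC (s : Finset ι) (r : ι → ℚ) {k : ℕ} (h : s.card < k) :
    (∏ i ∈ s, (X - C (r i))).coeff k = 0 := by
  apply coeff_eq_zero_of_natDegree_lt
  rwa [natDegree_prodXC]

lemma c1_prodXC (s : Finset ι) (r : ι → ℚ) : ∀ n : ℕ, s.card = n + 1 →
    (∏ i ∈ s, (X - C (r i))).coeff n = -(∑ i ∈ s, r i) := by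
  induction s using Finset.induction with
  | empty => intro n h; simp at h
  | @insert a t ha ih =>
    intro n h
    rw [Finset.card_insert_of_notMem ha] at h
    rw [Finset.prod_insert ha, Finset.sum_insert ha]
    have hexp : (X - C (r a)) * ∏ i ∈ t, (X - C (r i)) =
        X * ∏ i ∈ t, (X - C (r i)) - C (r a) * ∏ i ∈ t, (X - C (r i)) := by ring
    rw [hexp]
    rcases n with _ | m
    · have ht : t = ∅ := Finset.card_eq_zero.mp (by omega)
      subst ht; simp
    · have htc : t.card = m + 1 := by omega
      rw [coeff_sub, coeff_X_mul, coeff_C_mul, ih m htc]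
      have : (∏ i ∈ t, (X - C (r i))).coeff (m + 1) = 1 := by
        have := top_prodXC t r; rwa [htc] at this
      rw [this]; ring

lemma c2_prodXC (s : Finset ι) (r : ι → ℚ) : ∀ n : ℕ, s.card = n + 2 →
    (∏ i ∈ s, (X - C (r i))).coeff n
      = ((∑ i ∈ s, r i) ^ 2 - ∑ i ∈ s, (r i) ^ 2) / 2 := by
  induction s using Finset.induction with
  | empty => intro n h; simp at h
  | @insert a t ha ih =>
    intro n h
    rw [Finset.card_insert_of_notMem ha] at h
    rw [Finset.prod_insert ha, Finset.sum_insert ha, Finset.sum_insert ha]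
    have hexp : (X - C (r a)) * ∏ i ∈ t, (X - C (r i)) =
        X * ∏ i ∈ t, (X - C (r i)) - C (r a) * ∏ i ∈ t, (X - C (r i)) := by ring
    rw [hexp]
    have htc : t.card = n + 1 := by omega
    have hc1 : (∏ i ∈ t, (X - C (r i))).coeff n = -(∑ i ∈ t, r i) := c1_prodXC t r n htc
    rcases n with _ | m
    · rw [coeff_sub, coeff_C_mul, hc1]
      have hx0 : (X * ∏ i ∈ t, (X - C (r i))).coeff 0 = 0 := by
        rw [mul_coeff_zero, coeff_X_zero, zero_mul]
      rw [hx0]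
      obtain ⟨b, rfl⟩ := Finset.card_eq_one.mp htc
      simp; ring
    · have hc2 : (∏ i ∈ t, (X - C (r i))).coeff m
          = ((∑ i ∈ t, r i) ^ 2 - ∑ i ∈ t, (r i) ^ 2) / 2 := ih m htc
      rw [coeff_sub, coeff_X_mul, coeff_C_mul, hc2, hc1]
      ring


lemma key2 (m : ℕ) (x : Fin (m + 2) → ℚ) (hx : Function.Injective x) (a ε : ℚ) (hε : ε ≠ 0) :
    ∑ i, (a + x i) * ∏ j ∈ Finset.univ.erase i, ((x i + ε - x j) / (x i - x j))
      = a * (m + 2 : ℚ) + (∑ i, x i)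
        + (((m + 2 : ℚ)) * ((m + 2 : ℚ) - 1) / 2) * ε := by
  set F : ℚ[X] := ∏ j, (X - C (x j)) with hF
  set G : ℚ[X] := ∏ j, (X - C (x j - ε)) with hG
  set P : ℚ[X] := (X + C a) * G with hP
  set q0 : ℚ := a + (m + 2 : ℚ) * ε with hq0
  set FQ : ℚ[X] := (X + C q0) * F with hFQ
  set R : ℚ[X] := P - FQ with hR
  have hDne : ∀ i : Fin (m + 2), (∏ j ∈ Finset.univ.erase i, (x i - x j)) ≠ 0 := by
    intro i
    apply Finset.prod_ne_zero_iff.mpr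
    intro j hj
    have : x i ≠ x j := fun h => (Finset.mem_erase.mp hj).1 (hx h).symm
    exact sub_ne_zero.mpr this
  set c : Fin (m + 2) → ℚ :=
    fun i => P.eval (x i) / ∏ j ∈ Finset.univ.erase i, (x i - x j) with hc
  set W : ℚ[X] := ∑ i, C (c i) * ∏ j ∈ Finset.univ.erase i, (X - C (x j)) with hW
  have hcard : (Finset.univ : Finset (Fin (m + 2))).card = m + 2 := by simp
  have hcarde : ∀ i : Fin (m + 2), (Finset.univ.erase i).card = m + 1 := by
    intro i
    rw [Finset.card_erase_of_mem (Finset.mem_univ i), hcard]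
    omega
  have hFe : ∀ i, F.eval (x i) = 0 := by
    intro i
    rw [hF, eval_prod]
    apply Finset.prod_eq_zero (Finset.mem_univ i)
    simp
  have hGe : ∀ i, G.eval (x i) = ε * ∏ j ∈ Finset.univ.erase i, (x i + ε - x j) := by
    intro i
    rw [hG, eval_prod]
    rw [← Finset.mul_prod_erase _ _ (Finset.mem_univ i)]
    simp only [eval_sub, eval_X, eval_C]
    congr 1
    · ring
    · apply Finset.prod_congr rfl; intro j _; ring
  have hWe : ∀ k, W.eval (x k) = P.eval (x k) := by
    intro k
    rw [hW, eval_finset_sum]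
    rw [Finset.sum_eq_single k]
    · simp only [eval_mul, eval_C, eval_prod, eval_sub, eval_X]
      rw [hc]
      exact div_mul_cancel₀ _ (hDne k)
    · intro i _ hik
      simp only [eval_mul, eval_C, eval_prod, eval_sub, eval_X]
      have : ∏ j ∈ Finset.univ.erase i, (x k - x j) = 0 := by
        apply Finset.prod_eq_zero (Finset.mem_erase.mpr ⟨hik.symm, Finset.mem_univ k⟩)
        simp
      rw [this, mul_zero]
    · intro h; exact absurd (Finset.mem_univ k) h
  have hRe : ∀ k, R.eval (x k) = P.eval (x k) := by
    intro k
    simp only [hR, hFQ, eval_sub, eval_mul, hFe k, mul_zero, sub_zero]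
  have he1 : ∑ i, (x i - ε) = (∑ i, x i) - (m + 2 : ℚ) * ε := by
    rw [Finset.sum_sub_distrib, Finset.sum_const, hcard]
    push_cast; ring
  have he2 : ∑ i, (x i - ε) ^ 2
      = (∑ i, (x i) ^ 2) - 2 * ε * (∑ i, x i) + (m + 2 : ℚ) * ε ^ 2 := by
    have h : ∀ i : Fin (m + 2), (x i - ε) ^ 2 = (x i) ^ 2 - 2 * ε * x i + ε ^ 2 := by
      intro i; ring
    rw [Finset.sum_congr rfl (fun i _ => h i), Finset.sum_add_distrib,
      Finset.sum_sub_distrib, Finset.sum_const, hcard, ← Finset.mul_sum]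
    push_cast; ring
  have hGtop : G.coeff (m + 2) = 1 := by
    have := top_prodXC (Finset.univ : Finset (Fin (m + 2))) (fun j => x j - ε)
    rwa [hcard] at this
  have hFtop : F.coeff (m + 2) = 1 := by
    have := top_prodXC (Finset.univ : Finset (Fin (m + 2))) x
    rwa [hcard] at this
  have hG1 : G.coeff (m + 1) = -((∑ i, x i) - (m + 2 : ℚ) * ε) := by
    have h := c1_prodXC (Finset.univ : Finset (Fin (m + 2))) (fun j => x j - ε) (m+1)
      (by rw [hcard])
    rw [hG]
    rw [h, he1]
  have hF1 : F.coeff (m + 1) = -(∑ i, x i) :=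
    c1_prodXC (Finset.univ : Finset (Fin (m + 2))) x (m+1) (by rw [hcard])
  have hG2 : G.coeff m = (((∑ i, x i) - (m + 2 : ℚ) * ε) ^ 2
      - ((∑ i, (x i) ^ 2) - 2 * ε * (∑ i, x i) + (m + 2 : ℚ) * ε ^ 2)) / 2 := by
    have h := c2_prodXC (Finset.univ : Finset (Fin (m + 2))) (fun j => x j - ε) m
      (by rw [hcard])
    rw [hG]
    rw [h, he1, he2]
  have hF2 : F.coeff m = ((∑ i, x i) ^ 2 - ∑ i, (x i) ^ 2) / 2 :=
    c2_prodXC (Finset.univ : Finset (Fin (m + 2))) x m (by rw [hcard])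
  have hGhigh : ∀ k, m + 2 < k → G.coeff k = 0 := by
    intro k hk
    rw [hG]
    exact high_prodXC (Finset.univ : Finset (Fin (m + 2))) _ (by rw [hcard]; omega)
  have hFhigh : ∀ k, m + 2 < k → F.coeff k = 0 := by
    intro k hk
    rw [hF]
    exact high_prodXC (Finset.univ : Finset (Fin (m + 2))) x (by rw [hcard]; omega)
  have hmulc : ∀ (b : ℚ) (Q : ℚ[X]) (k : ℕ),
      ((X + C b) * Q).coeff (k + 1) = Q.coeff k + b * Q.coeff (k + 1) := by
    intro b Q k
    have h : (X + C b) * Q = X * Q + C b * Q := by ring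
    rw [h, coeff_add, coeff_X_mul, coeff_C_mul]
  have hRcoeff : ∀ k, m + 2 ≤ k → R.coeff k = 0 := by
    intro k hk
    rw [hR, coeff_sub, hP, hFQ]
    have hcases : k = m + 2 ∨ k = m + 3 ∨ m + 4 ≤ k := by omega
    rcases hcases with rfl | rfl | hk4
    · rw [show m + 2 = (m + 1) + 1 from rfl, hmulc, hmulc]
      rw [show (m + 1) + 1 = m + 2 from rfl, hG1, hGtop, hF1, hFtop, hq0]
      push_cast; ring
    · rw [show m + 3 = (m + 2) + 1 from rfl, hmulc, hmulc]
      rw [show (m + 2) + 1 = m + 3 from rfl, hGtop, hFtop,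
        hGhigh _ (by omega), hFhigh _ (by omega)]
      ring
    · rcases k with _ | k'
      · omega
      · rw [hmulc, hmulc, hGhigh _ (by omega), hFhigh _ (by omega),
          hGhigh _ (by omega), hFhigh _ (by omega)]
        ring
  have hWcoeff : ∀ k, m + 2 ≤ k → W.coeff k = 0 := by
    intro k hk
    rw [hW, finset_sum_coeff]
    apply Finset.sum_eq_zero
    intro i _
    rw [coeff_C_mul]
    have h : (∏ j ∈ Finset.univ.erase i, (X - C (x j))).coeff k = 0 := by
      apply high_prodXC
      rw [hcarde i]; omega
    rw [h, mul_zero]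
  have hdegR : R.degree < ((m + 2 : ℕ) : WithBot ℕ) :=
    (degree_lt_iff_coeff_zero _ _).mpr (fun k hk => hRcoeff k (by exact_mod_cast hk))
  have hdegW : W.degree < ((m + 2 : ℕ) : WithBot ℕ) :=
    (degree_lt_iff_coeff_zero _ _).mpr (fun k hk => hWcoeff k (by exact_mod_cast hk))
  have hWR : W = R := by
    apply Polynomial.eq_of_degrees_lt_of_eval_index_eq (v := x) Finset.univ
    · exact fun i _ j _ h => hx h
    · rwa [hcard]
    · rwa [hcard]
    · intro i _; rw [hWe i, hRe i]
  have hWc : W.coeff (m + 1) = ∑ i, c i := by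
    rw [hW, finset_sum_coeff]
    apply Finset.sum_congr rfl
    intro i _
    rw [coeff_C_mul]
    have h : (∏ j ∈ Finset.univ.erase i, (X - C (x j))).coeff (m + 1) = 1 := by
      have := top_prodXC (Finset.univ.erase i) x
      rwa [hcarde i] at this
    rw [h, mul_one]
  have hRc : R.coeff (m + 1)
      = ε * (a * (m + 2 : ℚ) + (∑ i, x i)
        + ((m + 2 : ℚ) * ((m + 2 : ℚ) - 1) / 2) * ε) := by
    rw [hR, coeff_sub, hP, hFQ, show m + 1 = m + 1 from rfl]
    rw [hmulc, hmulc, hG2, hG1, hF2, hF1, hq0]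
    ring
  have hterm : ∀ i : Fin (m + 2),
      (a + x i) * ∏ j ∈ Finset.univ.erase i, ((x i + ε - x j) / (x i - x j))
      = c i / ε := by
    intro i
    rw [Finset.prod_div_distrib]
    simp only [hc]
    have hnum : ∏ j ∈ Finset.univ.erase i, (x i + ε - x j) = G.eval (x i) / ε := by
      rw [hGe i]; field_simp
    rw [hnum]
    have hPe : P.eval (x i) = (x i + a) * G.eval (x i) := by
      rw [hP, eval_mul, eval_add, eval_X, eval_C]
    rw [hPe]
    field_simp
    ring
  rw [Finset.sum_congr rfl (fun i _ => hterm i), ← Finset.sum_div, ← hWc, hWR, hRc]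
  field_simp

/-- The key partial-fractions identity. -/
lemma key (d : ℕ) (x : Fin d → ℚ) (hx : Function.Injective x) (a ε : ℚ) (hε : ε ≠ 0) :
    ∑ i, (a + x i) * ∏ j ∈ Finset.univ.erase i, ((x i + ε - x j) / (x i - x j))
      = a * d + (∑ i, x i) + ((d : ℚ) * ((d : ℚ) - 1) / 2) * ε := by
  rcases d with _ | _ | m
  · simp
  · rw [Fin.sum_univ_one, Fin.sum_univ_one]
    have : (Finset.univ.erase (0 : Fin 1)) = ∅ := by decide
    rw [this, Finset.prod_empty]
    push_cast; ring
  · have h := key2 m x hx a ε hε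
    rw [h]
    push_cast; ring



/-- the shifted-content function -/
def L (d : ℕ) (lam : Fin d → ℕ) (i : Fin d) : ℚ := (lam i : ℚ) - (i.1 : ℚ)

def pairs (d : ℕ) : Finset (Fin d × Fin d) :=
  Finset.univ.filter (fun p : Fin d × Fin d => p.1 < p.2)

def wfac {d : ℕ} (lam : Fin d → ℕ) (p : Fin d × Fin d) : ℚ :=
  (((lam p.1 : ℚ) - (lam p.2 : ℚ)) + (p.2.1 : ℚ) - (p.1.1 : ℚ)) / ((p.2.1 : ℚ) - (p.1.1 : ℚ))

lemma weylDim_eq {d : ℕ} (lam : Fin d → ℕ) : weylDim d lam = ∏ p ∈ pairs d, wfac lam p := rfl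

variable {d : ℕ}

lemma mem_pairs {p : Fin d × Fin d} : p ∈ pairs d ↔ p.1 < p.2 := by
  simp [pairs]

section antitone
variable {lam : Fin d → ℕ} (hA : ∀ i j : Fin d, i ≤ j → lam j ≤ lam i)

include hA

lemma L_lt {i j : Fin d} (hij : i < j) : L d lam j < L d lam i := by
  have h1 : lam j ≤ lam i := hA i j (le_of_lt hij)
  have h2 : (i.1 : ℚ) < (j.1 : ℚ) := by exact_mod_cast hij
  have h1' : (lam j : ℚ) ≤ (lam i : ℚ) := by exact_mod_cast h1
  simp only [L]
  linarith

lemma L_inj : Function.Injective (L d lam) := by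
  intro i j h
  rcases lt_trichotomy i j with hij | hij | hij
  · exfalso; have hl := L_lt hA hij; rw [h] at hl; exact lt_irrefl _ hl
  · exact hij
  · exfalso; have hl := L_lt hA hij; rw [← h] at hl; exact lt_irrefl _ hl

lemma L_ne {i j : Fin d} (h : i ≠ j) : L d lam i - L d lam j ≠ 0 :=
  sub_ne_zero.mpr (fun hh => h (L_inj hA hh))

end antitone

/-- transport a product over pairs containing `i` to a product over `univ.erase i`. -/
lemma prod_pairs_with (i : Fin d) (F : Fin d × Fin d → ℚ) :
    ∏ p ∈ (pairs d).filter (fun p => p.1 = i ∨ p.2 = i), F p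
      = ∏ j ∈ Finset.univ.erase i, F (if i < j then (i, j) else (j, i)) := by
  apply Finset.prod_bij' (i := fun p _ => if p.1 = i then p.2 else p.1)
    (j := fun j _ => if i < j then (i, j) else (j, i))
  · -- maps into erase i
    rintro ⟨a, b⟩ hp
    rw [Finset.mem_filter, mem_pairs] at hp
    obtain ⟨hlt, hor⟩ := hp
    simp only at hlt hor ⊢
    by_cases h1 : a = i
    · rw [if_pos h1]
      subst h1
      exact Finset.mem_erase.mpr ⟨ne_of_gt hlt, Finset.mem_univ _⟩
    · rw [if_neg h1]
      exact Finset.mem_erase.mpr ⟨h1, Finset.mem_univ _⟩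
  · -- maps into filter
    intro j hj
    have hji : j ≠ i := (Finset.mem_erase.mp hj).1
    by_cases h : i < j
    · rw [if_pos h, Finset.mem_filter, mem_pairs]
      exact ⟨h, Or.inl rfl⟩
    · have hji' : j < i := lt_of_le_of_ne (not_lt.mp h) hji
      rw [if_neg h, Finset.mem_filter, mem_pairs]
      exact ⟨hji', Or.inr rfl⟩
  · -- left_inv
    rintro ⟨a, b⟩ hp
    rw [Finset.mem_filter, mem_pairs] at hp
    obtain ⟨hlt, hor⟩ := hp
    simp only at hlt hor ⊢
    by_cases h1 : a = i
    · subst h1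
      rw [if_pos rfl, if_pos hlt]
    · have h2 : b = i := hor.resolve_left h1
      subst h2
      rw [if_neg h1, if_neg (fun hc => lt_irrefl a (lt_trans hlt hc))]
  · -- right_inv
    intro j hj
    have hji : j ≠ i := (Finset.mem_erase.mp hj).1
    by_cases h : i < j
    · rw [if_pos h]
      simp
    · rw [if_neg h]
      simp [hji]
  · -- values agree
    rintro ⟨a, b⟩ hp
    rw [Finset.mem_filter, mem_pairs] at hp
    obtain ⟨hlt, hor⟩ := hp
    simp only at hlt hor ⊢
    by_cases h1 : a = i
    · subst h1
      rw [if_pos rfl, if_pos hlt]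
    · have h2 : b = i := hor.resolve_left h1
      subst h2
      rw [if_neg h1, if_neg (fun hc => lt_irrefl a (lt_trans hlt hc))]


lemma wfac_ne_zero {lam : Fin d → ℕ} (hA : ∀ i j : Fin d, i ≤ j → lam j ≤ lam i)
    {p : Fin d × Fin d} (hp : p ∈ pairs d) : wfac lam p ≠ 0 := by
  rw [mem_pairs] at hp
  have hnum : ((lam p.1 : ℚ) - (lam p.2 : ℚ)) + (p.2.1 : ℚ) - (p.1.1 : ℚ)
      = L d lam p.1 - L d lam p.2 := by
    simp only [L]; ring
  have hden : ((p.2.1 : ℚ) - (p.1.1 : ℚ)) ≠ 0 := by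
    have : (p.1.1 : ℚ) < (p.2.1 : ℚ) := by exact_mod_cast hp
    intro h; linarith
  rw [wfac, hnum]
  exact div_ne_zero (L_ne hA (ne_of_lt hp)) hden

lemma weylDim_update {lam : Fin d → ℕ} (hA : ∀ i j : Fin d, i ≤ j → lam j ≤ lam i)
    (i : Fin d) (v : ℕ) :
    weylDim d (Function.update lam i v)
      = weylDim d lam * ∏ j ∈ Finset.univ.erase i,
          (((v : ℚ) - (i.1 : ℚ) - L d lam j) / (L d lam i - L d lam j)) := by
  rw [weylDim_eq, weylDim_eq]
  rw [← Finset.prod_filter_mul_prod_filter_not (pairs d)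
    (fun p => p.1 = i ∨ p.2 = i) (wfac (Function.update lam i v))]
  rw [← Finset.prod_filter_mul_prod_filter_not (pairs d)
    (fun p => p.1 = i ∨ p.2 = i) (wfac lam)]
  have hrest : ∏ p ∈ (pairs d).filter (fun p => ¬(p.1 = i ∨ p.2 = i)),
      wfac (Function.update lam i v) p
      = ∏ p ∈ (pairs d).filter (fun p => ¬(p.1 = i ∨ p.2 = i)), wfac lam p := by
    apply Finset.prod_congr rfl
    intro p hp
    rw [Finset.mem_filter] at hp
    push_neg at hp
    obtain ⟨-, h1, h2⟩ := hp
    rw [wfac, wfac, Function.update_of_ne h1, Function.update_of_ne h2]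
  rw [hrest]
  rw [prod_pairs_with i (wfac (Function.update lam i v)), prod_pairs_with i (wfac lam)]
  have hAQ : ∏ j ∈ Finset.univ.erase i,
      wfac (Function.update lam i v) (if i < j then (i, j) else (j, i))
      = (∏ j ∈ Finset.univ.erase i, wfac lam (if i < j then (i, j) else (j, i)))
        * ∏ j ∈ Finset.univ.erase i,
            (((v : ℚ) - (i.1 : ℚ) - L d lam j) / (L d lam i - L d lam j)) := by
    rw [← Finset.prod_mul_distrib]
    apply Finset.prod_congr rfl
    intro j hj
    have hji : j ≠ i := (Finset.mem_erase.mp hj).1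
    have hLden : L d lam i - L d lam j ≠ 0 := L_ne hA (Ne.symm hji)
    by_cases h : i < j
    · rw [if_pos h]
      have hvi : (i.1 : ℚ) < (j.1 : ℚ) := by exact_mod_cast h
      have hden : (j.1 : ℚ) - (i.1 : ℚ) ≠ 0 := by intro hc; linarith
      simp only [wfac, Function.update_self, Function.update_of_ne hji, L] at *
      field_simp
      ring
    · have hji' : j < i := lt_of_le_of_ne (not_lt.mp h) hji
      rw [if_neg h]
      have hvi : (j.1 : ℚ) < (i.1 : ℚ) := by exact_mod_cast hji'
      have hden : (i.1 : ℚ) - (j.1 : ℚ) ≠ 0 := by intro hc; linarith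
      simp only [wfac, Function.update_self, Function.update_of_ne hji, L] at *
      field_simp
      ring


  rw [hAQ]
  ring

lemma weylDim_addCell {lam : Fin d → ℕ} (hA : ∀ i j : Fin d, i ≤ j → lam j ≤ lam i)
    (i : Fin d) :
    weylDim d (addCell lam i)
      = weylDim d lam * ∏ j ∈ Finset.univ.erase i,
          ((L d lam i + 1 - L d lam j) / (L d lam i - L d lam j)) := by
  rw [addCell, weylDim_update hA]
  congr 1
  apply Finset.prod_congr rfl
  intro j _
  congr 1
  simp only [L]
  push_cast
  ring

lemma weylDim_removeCell {lam : Fin d → ℕ} (hA : ∀ i j : Fin d, i ≤ j → lam j ≤ lam i)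
    (i : Fin d) (hpos : 0 < lam i) :
    weylDim d (removeCell lam i)
      = weylDim d lam * ∏ j ∈ Finset.univ.erase i,
          ((L d lam i + (-1) - L d lam j) / (L d lam i - L d lam j)) := by
  rw [removeCell, weylDim_update hA]
  congr 1
  apply Finset.prod_congr rfl
  intro j _
  congr 1
  have h1 : ((lam i - 1 : ℕ) : ℚ) = (lam i : ℚ) - 1 := by
    have : 1 ≤ lam i := hpos
    push_cast [Nat.cast_sub this]
    ring
  rw [h1]
  simp only [L]
  ring

lemma sum_val_univ : ∀ d : ℕ, (∑ i : Fin d, (i.1 : ℚ)) = (d : ℚ) * ((d : ℚ) - 1) / 2 := by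
  intro d
  induction d with
  | zero => simp
  | succ n ih =>
    rw [Fin.sum_univ_castSucc]
    simp only [Fin.coe_castSucc, Fin.val_last]
    rw [ih]
    push_cast
    ring

lemma sum_L {lam : Fin d → ℕ} {N : ℕ} (hsum : ∑ i, lam i = N) :
    (∑ i, L d lam i) = (N : ℚ) - (d : ℚ) * ((d : ℚ) - 1) / 2 := by
  simp only [L]
  rw [Finset.sum_sub_distrib, sum_val_univ d]
  have : (∑ i : Fin d, ((lam i : ℚ))) = (N : ℚ) := by
    rw [← Nat.cast_sum]
    exact_mod_cast congrArg (fun n : ℕ => (n : ℚ)) hsum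
  rw [this]

lemma pieri_up {lam : Fin d → ℕ} (hA : ∀ i j : Fin d, i ≤ j → lam j ≤ lam i)
    {N : ℕ} (hsum : ∑ i, lam i = N) :
    ∑ i, ((d : ℚ) + L d lam i) * weylDim d (addCell lam i)
      = ((d : ℚ) ^ 2 + N) * weylDim d lam := by
  have h1 : ∀ i : Fin d, ((d : ℚ) + L d lam i) * weylDim d (addCell lam i)
      = weylDim d lam * (((d : ℚ) + L d lam i) * ∏ j ∈ Finset.univ.erase i,
          ((L d lam i + 1 - L d lam j) / (L d lam i - L d lam j))) := by
    intro i
    rw [weylDim_addCell hA i]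
    ring
  rw [Finset.sum_congr rfl (fun i _ => h1 i), ← Finset.mul_sum]
  rw [key d (L d lam) (L_inj hA) (d : ℚ) 1 one_ne_zero]
  rw [sum_L hsum]
  ring

lemma mem_AC_iff {lam : Fin d → ℕ} {i : Fin d} :
    i ∈ AC d lam ↔ ∀ j : Fin d, j < i → lam i < lam j := by
  simp [AC]

lemma mem_RC_iff {lam : Fin d → ℕ} {i : Fin d} :
    i ∈ RC d lam ↔ 0 < lam i ∧ ∀ j : Fin d, i < j → lam j < lam i := by
  simp [RC]

lemma weylDim_addCell_zero {lam : Fin d → ℕ} (hA : ∀ i j : Fin d, i ≤ j → lam j ≤ lam i)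
    {i : Fin d} (hi : i ∉ AC d lam) : weylDim d (addCell lam i) = 0 := by
  rw [mem_AC_iff] at hi
  push_neg at hi
  obtain ⟨j, hji, hle⟩ := hi
  have hji' : j.1 < i.1 := hji
  have hi1 : 1 ≤ i.1 := by omega
  set j0 : Fin d := ⟨i.1 - 1, by omega⟩ with hj0
  have hjj0 : j ≤ j0 := by
    rw [Fin.le_def]
    simp only [hj0]
    omega
  have hj0i : j0 ≤ i := by
    rw [Fin.le_def]
    simp only [hj0]
    omega
  have heq : lam j0 = lam i := le_antisymm (le_trans (hA j j0 hjj0) hle) (hA j0 i hj0i)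
  have hj0ne : j0 ≠ i := by
    rw [Fin.ne_iff_vne]
    simp only [hj0]
    omega
  rw [weylDim_addCell hA i]
  have hzero : ∏ j ∈ Finset.univ.erase i,
      ((L d lam i + 1 - L d lam j) / (L d lam i - L d lam j)) = 0 := by
    apply Finset.prod_eq_zero (Finset.mem_erase.mpr ⟨hj0ne, Finset.mem_univ j0⟩)
    have hnum : L d lam i + 1 - L d lam j0 = 0 := by
      simp only [L, hj0]
      have hcast : ((i.1 - 1 : ℕ) : ℚ) = (i.1 : ℚ) - 1 := by
        push_cast [Nat.cast_sub hi1]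
        ring
      rw [hcast]
      have : (lam j0 : ℚ) = (lam i : ℚ) := by exact_mod_cast heq
      rw [← hj0, this]
      ring
    rw [hnum, zero_div]
  rw [hzero, mul_zero]

lemma pieri_down {lam : Fin d → ℕ} (hA : ∀ i j : Fin d, i ≤ j → lam j ≤ lam i)
    {M : ℕ} (hsum : ∑ i, lam i = M) :
    ∑ i ∈ RC d lam, ((d : ℚ) - 1 + L d lam i) * weylDim d (removeCell lam i)
      = (M : ℚ) * weylDim d lam := by
  have h1 : ∑ i ∈ RC d lam, ((d : ℚ) - 1 + L d lam i) * weylDim d (removeCell lam i)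
      = ∑ i ∈ RC d lam, weylDim d lam * ((((d : ℚ) - 1) + L d lam i)
          * ∏ j ∈ Finset.univ.erase i,
              ((L d lam i + (-1) - L d lam j) / (L d lam i - L d lam j))) := by
    apply Finset.sum_congr rfl
    intro i hi
    have hpos : 0 < lam i := (mem_RC_iff.mp hi).1
    rw [weylDim_removeCell hA i hpos]
    ring
  rw [h1]
  have h2 : ∑ i ∈ RC d lam, weylDim d lam * ((((d : ℚ) - 1) + L d lam i)
          * ∏ j ∈ Finset.univ.erase i,
              ((L d lam i + (-1) - L d lam j) / (L d lam i - L d lam j)))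
      = ∑ i : Fin d, weylDim d lam * ((((d : ℚ) - 1) + L d lam i)
          * ∏ j ∈ Finset.univ.erase i,
              ((L d lam i + (-1) - L d lam j) / (L d lam i - L d lam j))) := by
    apply Finset.sum_subset (Finset.subset_univ _)
    intro i _ hiRC
    rw [mem_RC_iff] at hiRC
    push_neg at hiRC
    by_cases hlast : i.1 + 1 < d
    · -- the next row exists and has the same value
      set j1 : Fin d := ⟨i.1 + 1, hlast⟩ with hj1
      have hij1 : i < j1 := by
        rw [Fin.lt_def]
        simp only [hj1]
        omega
      have hj1ne : j1 ≠ i := by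
        rw [Fin.ne_iff_vne]
        simp only [hj1]
        omega
      have heq : lam j1 = lam i := by
        rcases Nat.eq_zero_or_pos (lam i) with h0 | hpos
        · have := hA i j1 (le_of_lt hij1)
          omega
        · obtain ⟨j, hij, hlej⟩ := hiRC hpos
          have hj1j : j1 ≤ j := by
            rw [Fin.le_def]
            have : i.1 < j.1 := hij
            simp only [hj1]
            omega
          exact le_antisymm (hA i j1 (le_of_lt hij1))
            (le_trans hlej (hA j1 j hj1j))
      have hzero : ∏ j ∈ Finset.univ.erase i,
          ((L d lam i + (-1) - L d lam j) / (L d lam i - L d lam j)) = 0 := by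
        apply Finset.prod_eq_zero (Finset.mem_erase.mpr ⟨hj1ne, Finset.mem_univ j1⟩)
        have hnum : L d lam i + (-1) - L d lam j1 = 0 := by
          simp only [L, hj1]
          have : (lam j1 : ℚ) = (lam i : ℚ) := by exact_mod_cast heq
          rw [← hj1, this]
          push_cast
          ring
        rw [hnum, zero_div]
      rw [hzero]
      ring
    · -- i is the last row, so lam i = 0 and the weight vanishes
      have hlast' : i.1 = d - 1 := by
        have := i.isLt
        omega
      have h0 : lam i = 0 := by
        by_contra hne
        have hpos : 0 < lam i := Nat.pos_of_ne_zero hne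
        obtain ⟨j, hij, -⟩ := hiRC hpos
        have : i.1 < j.1 := hij
        have := j.isLt
        omega
      have hw : ((d : ℚ) - 1) + L d lam i = 0 := by
        simp only [L, h0]
        have hd1 : 1 ≤ d := by
          have := i.isLt
          omega
        have : ((i.1 : ℕ) : ℚ) = (d : ℚ) - 1 := by
          rw [hlast']
          push_cast [Nat.cast_sub hd1]
          ring
        rw [this]
        push_cast
        ring
      rw [hw]
      ring
  rw [h2]
  have h3 : ∑ i : Fin d, weylDim d lam * ((((d : ℚ) - 1) + L d lam i)
          * ∏ j ∈ Finset.univ.erase i,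
              ((L d lam i + (-1) - L d lam j) / (L d lam i - L d lam j)))
      = weylDim d lam * ∑ i : Fin d, ((((d : ℚ) - 1) + L d lam i)
          * ∏ j ∈ Finset.univ.erase i,
              ((L d lam i + (-1) - L d lam j) / (L d lam i - L d lam j))) := by
    rw [Finset.mul_sum]
  rw [h3, key d (L d lam) (L_inj hA) ((d : ℚ) - 1) (-1) (by norm_num), sum_L hsum]
  ring


lemma mem_Ptn_iff {N : ℕ} {lam : Fin d → ℕ} :
    lam ∈ Ptn d N ↔ ((∀ i j : Fin d, i ≤ j → lam j ≤ lam i) ∧ ∑ i, lam i = N) := by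
  constructor
  · intro h
    exact (Finset.mem_filter.mp h).2
  · intro h
    refine Finset.mem_filter.mpr ⟨?_, h⟩
    rw [Fintype.mem_piFinset]
    intro i
    rw [Finset.mem_range]
    have hle : lam i ≤ ∑ j, lam j :=
      Finset.single_le_sum (fun j _ => Nat.zero_le _) (Finset.mem_univ i)
    omega

lemma sum_addCell {lam : Fin d → ℕ} (i : Fin d) :
    ∑ j, addCell lam i j = (∑ j, lam j) + 1 := by
  rw [addCell, Finset.sum_update_of_mem (Finset.mem_univ i), Finset.sdiff_singleton_eq_erase]
  have h := Finset.add_sum_erase Finset.univ lam (Finset.mem_univ i)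
  omega

lemma sum_removeCell {lam : Fin d → ℕ} (i : Fin d) (hpos : 0 < lam i) :
    ∑ j, removeCell lam i j = (∑ j, lam j) - 1 := by
  rw [removeCell, Finset.sum_update_of_mem (Finset.mem_univ i), Finset.sdiff_singleton_eq_erase]
  have h := Finset.add_sum_erase Finset.univ lam (Finset.mem_univ i)
  omega

lemma addCell_mem_Ptn {N : ℕ} {lam : Fin d → ℕ} (h : lam ∈ Ptn d N)
    {i : Fin d} (hi : i ∈ AC d lam) : addCell lam i ∈ Ptn d (N + 1) := by
  rw [mem_Ptn_iff] at h ⊢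
  obtain ⟨hA, hsum⟩ := h
  rw [mem_AC_iff] at hi
  constructor
  · intro k l hkl
    rw [addCell, Function.update_apply, Function.update_apply]
    by_cases hl : l = i
    · rw [if_pos hl]
      by_cases hk : k = i
      · rw [if_pos hk]
      · rw [if_neg hk]
        have hki : k < i := lt_of_le_of_ne (hl ▸ hkl) hk
        have := hi k hki
        omega
    · rw [if_neg hl]
      by_cases hk : k = i
      · rw [if_pos hk]
        have := hA k l hkl
        rw [hk] at this
        omega
      · rw [if_neg hk]
        exact hA k l hkl
  · rw [sum_addCell, hsum]

lemma mem_RC_addCell {lam : Fin d → ℕ} (hA : ∀ i j : Fin d, i ≤ j → lam j ≤ lam i)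
    {i : Fin d} (hi : i ∈ AC d lam) : i ∈ RC d (addCell lam i) := by
  rw [mem_RC_iff]
  rw [addCell]
  constructor
  · rw [Function.update_self]
    omega
  · intro j hij
    have hji : j ≠ i := ne_of_gt hij
    rw [Function.update_of_ne hji, Function.update_self]
    have := hA i j (le_of_lt hij)
    omega

lemma removeCell_mem_Ptn {N : ℕ} {lam : Fin d → ℕ} (h : lam ∈ Ptn d (N + 1))
    {i : Fin d} (hi : i ∈ RC d lam) : removeCell lam i ∈ Ptn d N := by
  rw [mem_Ptn_iff] at h ⊢
  obtain ⟨hA, hsum⟩ := h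
  rw [mem_RC_iff] at hi
  obtain ⟨hpos, hrc⟩ := hi
  constructor
  · intro k l hkl
    rw [removeCell, Function.update_apply, Function.update_apply]
    by_cases hl : l = i
    · rw [if_pos hl]
      by_cases hk : k = i
      · rw [if_pos hk]
      · rw [if_neg hk]
        have : lam i ≤ lam k := hA k i (hl ▸ hkl)
        omega
    · rw [if_neg hl]
      by_cases hk : k = i
      · rw [if_pos hk]
        have hil : i < l := lt_of_le_of_ne (hk ▸ hkl) (fun hc => hl hc.symm)
        have := hrc l hil
        omega
      · rw [if_neg hk]
        exact hA k l hkl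
  · rw [sum_removeCell i hpos, hsum]
    omega

lemma mem_AC_removeCell {lam : Fin d → ℕ} (hA : ∀ i j : Fin d, i ≤ j → lam j ≤ lam i)
    {i : Fin d} (hi : i ∈ RC d lam) : i ∈ AC d (removeCell lam i) := by
  rw [mem_RC_iff] at hi
  obtain ⟨hpos, -⟩ := hi
  rw [mem_AC_iff]
  intro j hji
  rw [removeCell, Function.update_self, Function.update_of_ne (ne_of_lt hji)]
  have := hA j i (le_of_lt hji)
  omega

lemma remove_add {lam : Fin d → ℕ} {i : Fin d} (hpos : 0 < lam i) :
    addCell (removeCell lam i) i = lam := by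
  funext j
  rw [addCell, removeCell]
  by_cases hj : j = i
  · subst hj
    rw [Function.update_self, Function.update_self]
    omega
  · rw [Function.update_of_ne hj, Function.update_of_ne hj]

lemma add_remove {lam : Fin d → ℕ} (i : Fin d) :
    removeCell (addCell lam i) i = lam := by
  funext j
  rw [removeCell, addCell]
  by_cases hj : j = i
  · subst hj
    rw [Function.update_self, Function.update_self]
    omega
  · rw [Function.update_of_ne hj, Function.update_of_ne hj]

lemma sum_transport (N : ℕ) (f : (Fin d → ℕ) → Fin d → ℚ) :
    ∑ lam ∈ Ptn d N, ∑ i ∈ AC d lam, f lam i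
      = ∑ nu ∈ Ptn d (N + 1), ∑ i ∈ RC d nu, f (removeCell nu i) i := by
  rw [Finset.sum_sigma', Finset.sum_sigma']
  apply Finset.sum_bij' (i := fun p _ => (⟨addCell p.1 p.2, p.2⟩ : Σ _ : Fin d → ℕ, Fin d))
    (j := fun q _ => (⟨removeCell q.1 q.2, q.2⟩ : Σ _ : Fin d → ℕ, Fin d))
  · rintro ⟨lam, i⟩ hp
    rw [Finset.mem_sigma] at hp ⊢
    obtain ⟨h1, h2⟩ := hp
    have hA := (mem_Ptn_iff.mp h1).1
    exact ⟨addCell_mem_Ptn h1 h2, mem_RC_addCell hA h2⟩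
  · rintro ⟨nu, i⟩ hq
    rw [Finset.mem_sigma] at hq ⊢
    obtain ⟨h1, h2⟩ := hq
    have hA := (mem_Ptn_iff.mp h1).1
    exact ⟨removeCell_mem_Ptn h1 h2, mem_AC_removeCell hA h2⟩
  · rintro ⟨lam, i⟩ hp
    simp only
    congr 1
    exact add_remove i
  · rintro ⟨nu, i⟩ hq
    rw [Finset.mem_sigma] at hq
    have hpos : 0 < nu i := (mem_RC_iff.mp hq.2).1
    simp only
    congr 1
    exact remove_add hpos
  · rintro ⟨lam, i⟩ hp
    simp only
    rw [add_remove i]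



lemma step (d N : ℕ) :
    ((N : ℚ) + 1) * ∑ nu ∈ Ptn d (N + 1), (weylDim d nu) ^ 2
      = ((d : ℚ) ^ 2 + N) * ∑ lam ∈ Ptn d N, (weylDim d lam) ^ 2 := by
  have h1 : ∀ lam ∈ Ptn d N,
      ∑ i : Fin d, weylDim d lam * (((d : ℚ) + L d lam i) * weylDim d (addCell lam i))
        = ((d : ℚ) ^ 2 + N) * (weylDim d lam) ^ 2 := by
    intro lam hlam
    obtain ⟨hA, hsum⟩ := mem_Ptn_iff.mp hlam
    rw [← Finset.mul_sum, pieri_up hA hsum]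
    ring
  have h2 : ∀ lam ∈ Ptn d N,
      ∑ i ∈ AC d lam, weylDim d lam * (((d : ℚ) + L d lam i) * weylDim d (addCell lam i))
        = ∑ i : Fin d, weylDim d lam * (((d : ℚ) + L d lam i) * weylDim d (addCell lam i)) := by
    intro lam hlam
    obtain ⟨hA, hsum⟩ := mem_Ptn_iff.mp hlam
    apply Finset.sum_subset (Finset.subset_univ _)
    intro i _ hiac
    rw [weylDim_addCell_zero hA hiac]
    ring
  have h3 := sum_transport N
    (fun lam i => weylDim d lam * (((d : ℚ) + L d lam i) * weylDim d (addCell lam i)))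
  have h4 : ∀ nu ∈ Ptn d (N + 1), ∀ i ∈ RC d nu,
      weylDim d (removeCell nu i)
          * (((d : ℚ) + L d (removeCell nu i) i) * weylDim d (addCell (removeCell nu i) i))
        = weylDim d nu * ((((d : ℚ) - 1) + L d nu i) * weylDim d (removeCell nu i)) := by
    intro nu hnu i hi
    have hpos : 0 < nu i := (mem_RC_iff.mp hi).1
    rw [remove_add hpos]
    have hL : L d (removeCell nu i) i = L d nu i - 1 := by
      simp only [L, removeCell, Function.update_self]
      have : ((nu i - 1 : ℕ) : ℚ) = (nu i : ℚ) - 1 := by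
        push_cast [Nat.cast_sub hpos]
        ring
      rw [this]
      ring
    rw [hL]
    ring
  have h5 : ∀ nu ∈ Ptn d (N + 1),
      ∑ i ∈ RC d nu, weylDim d nu * ((((d : ℚ) - 1) + L d nu i) * weylDim d (removeCell nu i))
        = ((N : ℚ) + 1) * (weylDim d nu) ^ 2 := by
    intro nu hnu
    obtain ⟨hA, hsum⟩ := mem_Ptn_iff.mp hnu
    rw [← Finset.mul_sum, pieri_down hA hsum]
    push_cast
    ring
  calc ((N : ℚ) + 1) * ∑ nu ∈ Ptn d (N + 1), (weylDim d nu) ^ 2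
      = ∑ nu ∈ Ptn d (N + 1), ((N : ℚ) + 1) * (weylDim d nu) ^ 2 := by
        rw [Finset.mul_sum]
    _ = ∑ nu ∈ Ptn d (N + 1), ∑ i ∈ RC d nu,
          weylDim d nu * ((((d : ℚ) - 1) + L d nu i) * weylDim d (removeCell nu i)) := by
        exact (Finset.sum_congr rfl (fun nu hnu => (h5 nu hnu).symm))
    _ = ∑ nu ∈ Ptn d (N + 1), ∑ i ∈ RC d nu,
          weylDim d (removeCell nu i)
            * (((d : ℚ) + L d (removeCell nu i) i) * weylDim d (addCell (removeCell nu i) i)) := by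
        apply Finset.sum_congr rfl
        intro nu hnu
        exact Finset.sum_congr rfl (fun i hi => (h4 nu hnu i hi).symm)
    _ = ∑ lam ∈ Ptn d N, ∑ i ∈ AC d lam,
          weylDim d lam * (((d : ℚ) + L d lam i) * weylDim d (addCell lam i)) := h3.symm
    _ = ∑ lam ∈ Ptn d N, ∑ i : Fin d,
          weylDim d lam * (((d : ℚ) + L d lam i) * weylDim d (addCell lam i)) :=
        Finset.sum_congr rfl h2
    _ = ∑ lam ∈ Ptn d N, ((d : ℚ) ^ 2 + N) * (weylDim d lam) ^ 2 :=
        Finset.sum_congr rfl h1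
    _ = ((d : ℚ) ^ 2 + N) * ∑ lam ∈ Ptn d N, (weylDim d lam) ^ 2 := by
        rw [Finset.mul_sum]

lemma base (d : ℕ) : ∑ lam ∈ Ptn d 0, (weylDim d lam) ^ 2 = 1 := by
  have hPtn0 : Ptn d 0 = {fun _ => 0} := by
    ext lam
    rw [mem_Ptn_iff, Finset.mem_singleton]
    constructor
    · rintro ⟨-, hs⟩
      funext i
      exact (Finset.sum_eq_zero_iff.mp hs) i (Finset.mem_univ i)
    · rintro rfl
      exact ⟨fun i j _ => le_refl 0, by simp⟩
  rw [hPtn0, Finset.sum_singleton]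
  have hW : weylDim d (fun _ => 0) = 1 := by
    rw [weylDim]
    apply Finset.prod_eq_one
    intro p hp
    rw [Finset.mem_filter] at hp
    have hlt : (p.1.1 : ℚ) < (p.2.1 : ℚ) := by exact_mod_cast hp.2
    have hnum : (((0 : ℕ) : ℚ) - ((0 : ℕ) : ℚ)) + (p.2.1 : ℚ) - (p.1.1 : ℚ)
        = (p.2.1 : ℚ) - (p.1.1 : ℚ) := by
      push_cast
      ring
    rw [hnum]
    exact div_self (by linarith)
  rw [hW]
  norm_num

end PBTaux


theorem stmt3aux (d N : ℕ) (hd : 1 ≤ d) :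
    ∑ μ ∈ PBT.Ptn d N, (PBT.weylDim d μ) ^ 2 =
      (Nat.choose (N + d ^ 2 - 1) (d ^ 2 - 1) : ℚ) := by
  induction N with
  | zero =>
    rw [PBTaux.base d]
    have hd2 : 1 ≤ d ^ 2 := Nat.one_le_pow _ _ hd
    rw [show 0 + d ^ 2 - 1 = d ^ 2 - 1 from by omega, Nat.choose_self]
    norm_num
  | succ N ih =>
    have hd2 : 1 ≤ d ^ 2 := Nat.one_le_pow _ _ hd
    have hstep := PBTaux.step d N
    rw [ih] at hstep
    have hnat : (N + d ^ 2) * Nat.choose (N + d ^ 2 - 1) (d ^ 2 - 1)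
        = (N + 1) * Nat.choose (N + 1 + d ^ 2 - 1) (d ^ 2 - 1) := by
      have hsym1 : Nat.choose (N + d ^ 2 - 1) (d ^ 2 - 1)
          = Nat.choose (N + d ^ 2 - 1) N := by
        rw [show d ^ 2 - 1 = (N + d ^ 2 - 1) - N from by omega,
          Nat.choose_symm (by omega)]
      have hsym2 : Nat.choose (N + 1 + d ^ 2 - 1) (d ^ 2 - 1)
          = Nat.choose (N + d ^ 2) (N + 1) := by
        rw [show N + 1 + d ^ 2 - 1 = N + d ^ 2 from by omega,
          show d ^ 2 - 1 = (N + d ^ 2) - (N + 1) from by omega,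
          Nat.choose_symm (by omega)]
      rw [hsym1, hsym2]
      have hmc := Nat.add_one_mul_choose_eq (N + d ^ 2 - 1) N
      rw [show N + d ^ 2 - 1 + 1 = N + d ^ 2 from by omega] at hmc
      rw [hmc]
      ring
    have hne : ((N : ℚ) + 1) ≠ 0 := by positivity
    apply mul_left_cancel₀ hne
    rw [hstep]
    have hcast := congrArg (fun n : ℕ => (n : ℚ)) hnat
    push_cast at hcast
    push_cast
    linarith


/-- `∑_{μ ⊢_d N} m_μ² = C(N + d² − 1, d² − 1)`. -/
theorem stmt3 (d N : ℕ) (hd : 1 ≤ d) :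
    ∑ μ ∈ PBT.Ptn d N, (PBT.weylDim d μ) ^ 2 =
      (Nat.choose (N + d ^ 2 - 1) (d ^ 2 - 1) : ℚ) := by
  exact stmt3aux d N hd
end

section
/- Let f_μ := m_μ² / Σ_{μ' ⊢_d N} m_{μ'}² for partitions μ ⊢_d N. Then the expression p_succ := (1/d²) Σ_{λ ⊢_d N−1} ( Σ_{a ∈ AC_d(λ)} f_{λ∪a} / m_{λ∪a} ) ( Σ_{r ∈ RC(λ)} m_{λ∖r} ) equals N(N−1) / ((N + d² − 1)(N + d² − 2)). -/
open Finset BigOperators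

namespace PBTAux
open Polynomial PBT

variable {ι : Type*} [DecidableEq ι]

lemma natDegree_prodXC (f : ι → ℚ) (s : Finset ι) :
    (∏ i ∈ s, (X - C (f i))).natDegree = s.card := by
  rw [Polynomial.natDegree_prod]
  · simp [Polynomial.natDegree_X_sub_C]
  · intro i _; exact Polynomial.X_sub_C_ne_zero _

lemma monic_prodXC (f : ι → ℚ) (s : Finset ι) :
    (∏ i ∈ s, (X - C (f i))).Monic :=
  Polynomial.monic_prod_of_monic _ _ fun i _ => Polynomial.monic_X_sub_C _

lemma coeff_prodXC_card (f : ι → ℚ) (s : Finset ι) :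
    (∏ i ∈ s, (X - C (f i))).coeff s.card = 1 := by
  have h := (monic_prodXC f s).coeff_natDegree
  rwa [natDegree_prodXC] at h

lemma coeff_prodXC_gt (f : ι → ℚ) (s : Finset ι) {k : ℕ} (hk : s.card < k) :
    (∏ i ∈ s, (X - C (f i))).coeff k = 0 := by
  apply Polynomial.coeff_eq_zero_of_natDegree_lt
  rwa [natDegree_prodXC]

lemma coeff_prodXC_pred (f : ι → ℚ) (s : Finset ι) {m : ℕ} (hm : s.card = m + 1) :
    (∏ i ∈ s, (X - C (f i))).coeff m = -∑ i ∈ s, f i := by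
  have h := Polynomial.prod_X_sub_C_coeff_card_pred s f (by omega)
  rwa [hm, Nat.add_sub_cancel] at h

lemma coeff_prodXC_pred2 (f : ι → ℚ) (s : Finset ι) :
    ∀ m : ℕ, s.card = m + 2 →
    (∏ i ∈ s, (X - C (f i))).coeff m
      = ((∑ i ∈ s, f i) ^ 2 - ∑ i ∈ s, (f i) ^ 2) / 2 := by
  induction s using Finset.induction_on with
  | empty => intro m hm; simp at hm
  | insert a s ha ih =>
    intro m hm
    rw [Finset.card_insert_of_notMem ha] at hm
    rw [Finset.prod_insert ha, Finset.sum_insert ha, Finset.sum_insert ha]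
    have hexp : (X - C (f a)) * ∏ i ∈ s, (X - C (f i))
        = X * ∏ i ∈ s, (X - C (f i)) - C (f a) * ∏ i ∈ s, (X - C (f i)) := by ring
    rcases Nat.eq_zero_or_pos m with rfl | hmpos
    · -- s.card = 1
      obtain ⟨b, rfl⟩ := Finset.card_eq_one.mp (by omega : s.card = 1)
      simp only [Finset.prod_singleton, Finset.sum_singleton]
      have : (X - C (f a)) * (X - C (f b)) = X^2 - (C (f a) + C (f b)) * X + C (f a) * C (f b) := by
        ring
      rw [this]
      simp [Polynomial.coeff_add, Polynomial.coeff_sub, Polynomial.coeff_X_pow,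
        Polynomial.coeff_mul_X, Polynomial.coeff_C_mul, Polynomial.mul_coeff_zero]
      ring
    · obtain ⟨k, rfl⟩ := Nat.exists_eq_succ_of_ne_zero (by omega : m ≠ 0)
      have hcs : s.card = k + 2 := by omega
      rw [hexp, Polynomial.coeff_sub, Polynomial.coeff_X_mul, Polynomial.coeff_C_mul,
        ih k hcs, coeff_prodXC_pred f s (by omega : s.card = (k+1) + 1)]
      ring

lemma basis_coeff {d : ℕ} (x : Fin d → ℚ) (hx : Function.Injective x) (i : Fin d) :
    (Lagrange.basis Finset.univ x i).coeff (d - 1)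
      = ∏ j ∈ Finset.univ.erase i, (x i - x j)⁻¹ := by
  have hcard : (Finset.univ.erase i).card = d - 1 := by
    rw [Finset.card_erase_of_mem (Finset.mem_univ i), Finset.card_univ, Fintype.card_fin]
  unfold Lagrange.basis Lagrange.basisDivisor
  rw [Finset.prod_mul_distrib, ← map_prod, Polynomial.coeff_C_mul, ← hcard,
    coeff_prodXC_card]
  rw [mul_one]

lemma dd_master {d : ℕ} (hd : 0 < d) (x : Fin d → ℚ) (hx : Function.Injective x)
    (q : ℚ[X]) (hq : q.degree < d) :
    ∑ i, q.eval (x i) * (∏ j ∈ Finset.univ.erase i, (x i - x j))⁻¹ = q.coeff (d - 1) := by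
  have hinj : Set.InjOn x (Finset.univ : Finset (Fin d)) := fun a _ b _ h => hx h
  have hcard : ((Finset.univ : Finset (Fin d)).card : ℕ) = d := by simp
  have hq' : q.degree < ((Finset.univ : Finset (Fin d)).card : ℕ) := by rwa [hcard]
  have h := Lagrange.eq_interpolate hinj hq'
  calc ∑ i, q.eval (x i) * (∏ j ∈ Finset.univ.erase i, (x i - x j))⁻¹
      = ∑ i, q.eval (x i) * (Lagrange.basis Finset.univ x i).coeff (d - 1) := by
        refine Finset.sum_congr rfl fun i _ => ?_
        rw [basis_coeff x hx, Finset.prod_inv_distrib]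
    _ = (Lagrange.interpolate Finset.univ x fun i => q.eval (x i)).coeff (d - 1) := by
        rw [Lagrange.interpolate_apply, Polynomial.finset_sum_coeff]
        refine Finset.sum_congr rfl fun i _ => ?_
        rw [Polynomial.coeff_C_mul]
    _ = q.coeff (d - 1) := by rw [← h]

lemma coeff_Xc_mul (c : ℚ) (P : ℚ[X]) (k : ℕ) :
    ((X + C c) * P).coeff (k + 1) = P.coeff k + c * P.coeff (k + 1) := by
  rw [add_mul, Polynomial.coeff_add, Polynomial.coeff_X_mul, Polynomial.coeff_C_mul]

lemma prodXC_eval {d : ℕ} (x : Fin d → ℚ) (t e : ℚ) :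
    (∏ j : Fin d, (X - C (x j - e))).eval t = ∏ j : Fin d, (t + e - x j) := by
  rw [Polynomial.eval_prod]
  exact Finset.prod_congr rfl fun j _ => by simp; ring

lemma idW {d : ℕ} (hd : 0 < d) (x : Fin d → ℚ) (hx : Function.Injective x)
    (c ε : ℚ) (hε : ε ≠ 0) :
    ∑ i, (x i + c) * (∏ j ∈ Finset.univ.erase i, (x i + ε - x j))
        * (∏ j ∈ Finset.univ.erase i, (x i - x j))⁻¹
      = (∑ i, x i) + ε * (d * (d - 1) / 2) + c * d := by
  rcases lt_or_ge d 2 with h1 | h2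
  · -- d = 1
    have hd1 : d = 1 := by omega
    subst hd1
    have he : (Finset.univ : Finset (Fin 1)).erase 0 = ∅ := by decide
    rw [Fin.sum_univ_one, Fin.sum_univ_one, he]
    simp only [Finset.prod_empty, Nat.cast_one]
    ring
  · -- d ≥ 2
    set F := ∏ j : Fin d, (X - C (x j - ε)) with hF
    set G := ∏ j : Fin d, (X - C (x j - 0)) with hG
    set q := (X + C c) * F - (X + C (c + d * ε)) * G with hq
    have hcard : (Finset.univ : Finset (Fin d)).card = d := by simp
    have hFd : F.coeff d = 1 := by
      have h := coeff_prodXC_card (fun j => x j - ε) Finset.univ; rwa [hcard] at h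
    have hFd1 : F.coeff (d - 1) = -∑ j, (x j - ε) :=
      coeff_prodXC_pred (fun j => x j - ε) Finset.univ (by omega)
    have hFd2 : F.coeff (d - 2) = ((∑ j, (x j - ε)) ^ 2 - ∑ j, (x j - ε) ^ 2) / 2 :=
      coeff_prodXC_pred2 (fun j => x j - ε) Finset.univ (d - 2) (by omega)
    have hFgt : ∀ k, d < k → F.coeff k = 0 := fun k hk =>
      coeff_prodXC_gt (fun j => x j - ε) Finset.univ (by omega)
    have hGd : G.coeff d = 1 := by
      have h := coeff_prodXC_card (fun j => x j - 0) Finset.univ; rwa [hcard] at h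
    have hGd1 : G.coeff (d - 1) = -∑ j, (x j - 0) :=
      coeff_prodXC_pred (fun j => x j - 0) Finset.univ (by omega)
    have hGd2 : G.coeff (d - 2) = ((∑ j, (x j - 0)) ^ 2 - ∑ j, (x j - 0) ^ 2) / 2 :=
      coeff_prodXC_pred2 (fun j => x j - 0) Finset.univ (d - 2) (by omega)
    have hGgt : ∀ k, d < k → G.coeff k = 0 := fun k hk =>
      coeff_prodXC_gt (fun j => x j - 0) Finset.univ (by omega)
    -- degree of q
    have hdeg : q.degree < d := by
      rw [Polynomial.degree_lt_iff_coeff_zero]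
      intro m hm
      have hm' : d ≤ m := by exact_mod_cast hm
      rw [hq, Polynomial.coeff_sub]
      rcases eq_or_lt_of_le hm' with rfl | hlt
      · obtain ⟨k, rfl⟩ : ∃ k, d = k + 1 := ⟨d - 1, by omega⟩
        rw [coeff_Xc_mul, coeff_Xc_mul, hFd, hGd]
        have h1 : F.coeff k = -∑ j, (x j - ε) := by
          have := hFd1; rwa [show k + 1 - 1 = k by omega] at this
        have h2 : G.coeff k = -∑ j, (x j - 0) := by
          have := hGd1; rwa [show k + 1 - 1 = k by omega] at this
        rw [h1, h2]
        simp only [Finset.sum_sub_distrib, Finset.sum_const, hcard, nsmul_eq_mul]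
        ring
      · obtain ⟨k, rfl⟩ : ∃ k, m = k + 1 := ⟨m - 1, by omega⟩
        rw [coeff_Xc_mul, coeff_Xc_mul]
        rcases eq_or_lt_of_le (by omega : d ≤ k) with rfl | hlt2
        · rw [hFd, hGd, hFgt _ (by omega), hGgt _ (by omega)]; ring
        · rw [hFgt _ (by omega), hGgt _ (by omega), hFgt _ (by omega), hGgt _ (by omega)]
          ring
    -- value of coeff (d-1) of q
    have hcoeff : q.coeff (d - 1)
        = ε * ((∑ i, x i) + ε * (d * (d - 1) / 2) + c * d) := by
      obtain ⟨k, hk⟩ : ∃ k, d = k + 2 := ⟨d - 2, by omega⟩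
      have e1 : d - 1 = k + 1 := by omega
      have e2 : d - 2 = k := by omega
      rw [hq, Polynomial.coeff_sub, e1, coeff_Xc_mul, coeff_Xc_mul,
        show k + 1 = d - 1 by omega, show k = d - 2 by omega,
        hFd1, hFd2, hGd1, hGd2]
      have hs1 : ∑ j, (x j - ε) = (∑ j, x j) - d * ε := by
        rw [Finset.sum_sub_distrib]; simp [hcard]
      have hs0 : ∑ j, (x j - 0) = (∑ j, x j) := by simp
      have hsq : ∑ j, (x j - ε) ^ 2 = (∑ j, (x j)^2) - 2*ε*(∑ j, x j) + d * ε^2 := by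
        have : ∀ j : Fin d, (x j - ε)^2 = (x j)^2 - 2*ε*(x j) + ε^2 := fun j => by ring
        rw [Finset.sum_congr rfl fun j _ => this j]
        rw [Finset.sum_add_distrib, Finset.sum_sub_distrib, Finset.mul_sum]
        simp [hcard]
      have hsq0 : ∑ j, (x j - 0) ^ 2 = (∑ j, (x j)^2) := by simp
      rw [hs1, hs0, hsq, hsq0]
      ring
    -- evaluate q at nodes
    have heval : ∀ i : Fin d, q.eval (x i)
        = ε * ((x i + c) * ∏ j ∈ Finset.univ.erase i, (x i + ε - x j)) := by
      intro i
      have hGe : G.eval (x i) = 0 := by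
        rw [hG, Polynomial.eval_prod]
        exact Finset.prod_eq_zero (Finset.mem_univ i) (by simp)
      have hFe : F.eval (x i) = ε * ∏ j ∈ Finset.univ.erase i, (x i + ε - x j) := by
        rw [hF, prodXC_eval x (x i) ε, ← Finset.mul_prod_erase _ _ (Finset.mem_univ i)]
        congr 1; ring
      rw [hq]
      simp only [Polynomial.eval_sub, Polynomial.eval_mul, Polynomial.eval_add,
        Polynomial.eval_X, Polynomial.eval_C, hGe, hFe]
      ring
    have hmaster := dd_master hd x hx q hdeg
    rw [Finset.sum_congr rfl (fun i _ => by rw [heval i])] at hmaster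
    rw [hcoeff] at hmaster
    have : ε * ∑ i, (x i + c) * (∏ j ∈ Finset.univ.erase i, (x i + ε - x j))
        * (∏ j ∈ Finset.univ.erase i, (x i - x j))⁻¹
        = ε * ((∑ i, x i) + ε * (d * (d - 1) / 2) + c * d) := by
      rw [← hmaster, Finset.mul_sum]
      exact Finset.sum_congr rfl fun i _ => by ring
    exact mul_left_cancel₀ hε this

lemma idA {d : ℕ} (hd : 0 < d) (x : Fin d → ℚ) (hx : Function.Injective x)
    (ε : ℚ) (hε : ε ≠ 0) :
    ∑ i, (∏ j ∈ Finset.univ.erase i, (x i + ε - x j))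
        * (∏ j ∈ Finset.univ.erase i, (x i - x j))⁻¹ = d := by
  have h1 := idW hd x hx 1 ε hε
  have h0 := idW hd x hx 0 ε hε
  calc ∑ i, (∏ j ∈ Finset.univ.erase i, (x i + ε - x j))
        * (∏ j ∈ Finset.univ.erase i, (x i - x j))⁻¹
      = (∑ i, (x i + 1) * (∏ j ∈ Finset.univ.erase i, (x i + ε - x j))
        * (∏ j ∈ Finset.univ.erase i, (x i - x j))⁻¹)
        - (∑ i, (x i + 0) * (∏ j ∈ Finset.univ.erase i, (x i + ε - x j))
        * (∏ j ∈ Finset.univ.erase i, (x i - x j))⁻¹) := by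
        rw [← Finset.sum_sub_distrib]
        exact Finset.sum_congr rfl fun i _ => by ring
    _ = d := by rw [h1, h0]; ring

section Comb

variable {d : ℕ}

/-- pair set -/
def Pp (d : ℕ) : Finset (Fin d × Fin d) := Finset.univ.filter (fun p => p.1 < p.2)

def Vfn (z : Fin d → ℚ) : ℚ := ∏ p ∈ Pp d, (z p.1 - z p.2)

lemma prod_pairs_fst (f : Fin d × Fin d → ℚ) (i : Fin d) :
    ∏ p ∈ (Pp d).filter (fun p => p.1 = i), f p
      = ∏ j ∈ Finset.univ.filter (fun j => i < j), f (i, j) := by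
  rw [show (Pp d).filter (fun p => p.1 = i)
      = (Finset.univ.filter (fun j => i < j)).image (fun j => (i, j)) by
    ext p
    simp only [Pp, Finset.mem_filter, Finset.mem_univ, true_and, Finset.mem_image]
    constructor
    · rintro ⟨h1, h2⟩; subst h2; exact ⟨p.2, h1, Prod.mk.eta⟩
    · rintro ⟨j, hj, rfl⟩; exact ⟨hj, rfl⟩]
  rw [Finset.prod_image]
  intro a _ b _ h
  simpa using h

lemma prod_pairs_snd (f : Fin d × Fin d → ℚ) (i : Fin d) :
    ∏ p ∈ (Pp d).filter (fun p => p.1 ≠ i ∧ p.2 = i), f p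
      = ∏ j ∈ Finset.univ.filter (fun j => j < i), f (j, i) := by
  rw [show (Pp d).filter (fun p => p.1 ≠ i ∧ p.2 = i)
      = (Finset.univ.filter (fun j => j < i)).image (fun j => (j, i)) by
    ext p
    simp only [Pp, Finset.mem_filter, Finset.mem_univ, true_and, Finset.mem_image]
    constructor
    · rintro ⟨h1, _, h3⟩; subst h3; exact ⟨p.1, h1, Prod.mk.eta⟩
    · rintro ⟨j, hj, rfl⟩; exact ⟨hj, ne_of_lt hj, rfl⟩]
  rw [Finset.prod_image]
  intro a _ b _ h
  simpa using h

lemma V_split (z : Fin d → ℚ) (i : Fin d) :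
    Vfn z = (∏ p ∈ (Pp d).filter (fun p => ¬(p.1 = i ∨ p.2 = i)), (z p.1 - z p.2))
      * ((∏ j ∈ Finset.univ.filter (fun j => i < j), (z i - z j))
         * ∏ j ∈ Finset.univ.filter (fun j => j < i), (z j - z i)) := by
  have h0 : Vfn z = (∏ p ∈ (Pp d).filter (fun p => (p.1 = i ∨ p.2 = i)), (z p.1 - z p.2))
      * ∏ p ∈ (Pp d).filter (fun p => ¬(p.1 = i ∨ p.2 = i)), (z p.1 - z p.2) :=
    (Finset.prod_filter_mul_prod_filter_not (Pp d) _ _).symm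
  have h1 : (Pp d).filter (fun p => (p.1 = i ∨ p.2 = i))
      = ((Pp d).filter (fun p => p.1 = i)) ∪ ((Pp d).filter (fun p => p.1 ≠ i ∧ p.2 = i)) := by
    ext p
    simp only [Finset.mem_filter, Finset.mem_union, Pp, Finset.mem_univ, true_and]
    constructor
    · rintro ⟨hp, h | h⟩
      · exact Or.inl ⟨hp, h⟩
      · by_cases hc : p.1 = i
        · exact Or.inl ⟨hp, hc⟩
        · exact Or.inr ⟨hp, hc, h⟩
    · rintro (⟨hp, h⟩ | ⟨hp, _, h⟩)
      · exact ⟨hp, Or.inl h⟩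
      · exact ⟨hp, Or.inr h⟩
  have hdisj : Disjoint ((Pp d).filter (fun p => p.1 = i))
      ((Pp d).filter (fun p => p.1 ≠ i ∧ p.2 = i)) := by
    rw [Finset.disjoint_left]
    intro p hp hp2
    simp only [Finset.mem_filter] at hp hp2
    exact hp2.2.1 hp.2
  rw [h0, h1, Finset.prod_union hdisj, prod_pairs_fst (fun p => z p.1 - z p.2) i,
    prod_pairs_snd (fun p => z p.1 - z p.2) i]
  ring

end Comb

lemma erase_split (i : Fin d) (g : Fin d → ℚ) :
    ∏ j ∈ Finset.univ.erase i, g j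
      = (∏ j ∈ Finset.univ.filter (fun j => i < j), g j)
        * ∏ j ∈ Finset.univ.filter (fun j => j < i), g j := by
  rw [← Finset.prod_filter_mul_prod_filter_not (Finset.univ.erase i) (fun j => i < j) g]
  have h1 : (Finset.univ.erase i).filter (fun j => i < j)
      = Finset.univ.filter (fun j => i < j) := by
    ext j
    simp only [Finset.mem_filter, Finset.mem_erase, Finset.mem_univ, true_and, and_true]
    exact ⟨fun h => h.2, fun h => ⟨ne_of_gt h, h⟩⟩
  have h2 : (Finset.univ.erase i).filter (fun j => ¬ i < j)
      = Finset.univ.filter (fun j => j < i) := by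
    ext j
    simp only [Finset.mem_filter, Finset.mem_erase, Finset.mem_univ, true_and, and_true]
    constructor
    · rintro ⟨hne, hnlt⟩; exact lt_of_le_of_ne (not_lt.mp hnlt) hne
    · intro h; exact ⟨ne_of_lt h, not_lt.mpr (le_of_lt h)⟩
  rw [h1, h2]

lemma prod_neg_swap (s : Finset (Fin d)) (a b : Fin d → ℚ) :
    ∏ j ∈ s, (a j - b j) = (-1 : ℚ) ^ s.card * ∏ j ∈ s, (b j - a j) := by
  rw [← Finset.prod_const, ← Finset.prod_mul_distrib]
  exact Finset.prod_congr rfl fun j _ => by ring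

lemma V_update (x : Fin d → ℚ) (i : Fin d) (t : ℚ) :
    Vfn (Function.update x i t) * ∏ j ∈ Finset.univ.erase i, (x i - x j)
      = Vfn x * ∏ j ∈ Finset.univ.erase i, (t - x j) := by
  have hupd_ne : ∀ j : Fin d, j ≠ i → Function.update x i t j = x j := fun j hj =>
    Function.update_of_ne hj t x
  have hupd_i : Function.update x i t i = t := Function.update_self i t x
  rw [V_split (Function.update x i t) i, V_split x i, erase_split i, erase_split i]
  have hPno : ∏ p ∈ (Pp d).filter (fun p => ¬(p.1 = i ∨ p.2 = i)),
      (Function.update x i t p.1 - Function.update x i t p.2)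
      = ∏ p ∈ (Pp d).filter (fun p => ¬(p.1 = i ∨ p.2 = i)), (x p.1 - x p.2) := by
    refine Finset.prod_congr rfl fun p hp => ?_
    simp only [Finset.mem_filter, not_or] at hp
    rw [hupd_ne _ hp.2.1, hupd_ne _ hp.2.2]
  have hgt : ∀ j ∈ Finset.univ.filter (fun j => i < j),
      Function.update x i t i - Function.update x i t j = t - x j := fun j hj => by
    simp only [Finset.mem_filter] at hj
    rw [hupd_i, hupd_ne _ (ne_of_lt hj.2).symm]
  have hlt : ∀ j ∈ Finset.univ.filter (fun j => j < i),
      Function.update x i t j - Function.update x i t i = x j - t := fun j hj => by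
    simp only [Finset.mem_filter] at hj
    rw [hupd_i, hupd_ne _ (ne_of_lt hj.2)]
  rw [hPno, Finset.prod_congr rfl hgt, Finset.prod_congr rfl hlt]
  rw [prod_neg_swap (Finset.univ.filter (fun j => j < i)) x (fun _ => t),
    prod_neg_swap (Finset.univ.filter (fun j => j < i)) x (fun _ => x i)]
  ring

/-- denominator of the Weyl dimension formula -/
def Dden (d : ℕ) : ℚ := ∏ p ∈ Pp d, ((p.2.1 : ℚ) - (p.1.1 : ℚ))

lemma Dden_pos : 0 < Dden d := by
  refine Finset.prod_pos fun p hp => ?_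
  simp only [Pp, Finset.mem_filter] at hp
  have : (p.1.1 : ℕ) < p.2.1 := hp.2
  have : (p.1.1 : ℚ) < (p.2.1 : ℚ) := by exact_mod_cast this
  linarith

/-- shifted coordinates -/
def xc (lam : Fin d → ℕ) : Fin d → ℚ := fun i => (lam i : ℚ) - (i.1 : ℚ)

lemma weylDim_eq (lam : Fin d → ℕ) :
    weylDim d lam = Vfn (xc lam) / Dden d := by
  rw [weylDim, Vfn, Dden, ← Finset.prod_div_distrib]
  refine Finset.prod_congr rfl fun p hp => ?_
  rw [xc, xc]
  congr 1
  ring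

lemma xc_strictAnti (lam : Fin d → ℕ) (hanti : ∀ i j : Fin d, i ≤ j → lam j ≤ lam i) :
    ∀ i j : Fin d, i < j → xc lam j < xc lam i := by
  intro i j hij
  have h1 : lam j ≤ lam i := hanti i j (le_of_lt hij)
  have h2 : (i.1 : ℕ) < j.1 := hij
  have h1' : (lam j : ℚ) ≤ lam i := by exact_mod_cast h1
  have h2' : (i.1 : ℚ) < j.1 := by exact_mod_cast h2
  simp only [xc]
  linarith

lemma xc_inj (lam : Fin d → ℕ) (hanti : ∀ i j : Fin d, i ≤ j → lam j ≤ lam i) :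
    Function.Injective (xc lam) := by
  intro i j h
  rcases lt_trichotomy i j with hij | hij | hij
  · exact absurd h (ne_of_gt (xc_strictAnti lam hanti i j hij))
  · exact hij
  · exact absurd h (ne_of_lt (xc_strictAnti lam hanti j i hij))

lemma prod_erase_ne_zero (lam : Fin d → ℕ) (hanti : ∀ i j : Fin d, i ≤ j → lam j ≤ lam i)
    (i : Fin d) : ∏ j ∈ Finset.univ.erase i, (xc lam i - xc lam j) ≠ 0 := by
  rw [Finset.prod_ne_zero_iff]
  intro j hj
  rw [Finset.mem_erase] at hj
  exact sub_ne_zero_of_ne fun h => hj.1.symm (xc_inj lam hanti h)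

lemma weylDim_update (lam : Fin d → ℕ) (hanti : ∀ i j : Fin d, i ≤ j → lam j ≤ lam i)
    (i : Fin d) (v : ℕ) :
    weylDim d (Function.update lam i v)
      = weylDim d lam * (∏ j ∈ Finset.univ.erase i, (((v : ℚ) - i.1) - xc lam j))
        * (∏ j ∈ Finset.univ.erase i, (xc lam i - xc lam j))⁻¹ := by
  have hx : xc (Function.update lam i v) = Function.update (xc lam) i ((v : ℚ) - i.1) := by
    funext j
    by_cases hj : j = i
    · subst hj; simp [xc, Function.update_self]
    · simp [xc, Function.update_of_ne hj]
  have hne := prod_erase_ne_zero lam hanti i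
  have hV := V_update (xc lam) i ((v : ℚ) - i.1)
  rw [weylDim_eq, weylDim_eq, hx]
  have hVu : Vfn (Function.update (xc lam) i ((v : ℚ) - i.1))
      = Vfn (xc lam) * (∏ j ∈ Finset.univ.erase i, (((v : ℚ) - i.1) - xc lam j))
        / (∏ j ∈ Finset.univ.erase i, (xc lam i - xc lam j)) := by
    rw [eq_div_iff hne]
    exact hV
  rw [hVu]
  rw [div_div, div_eq_mul_inv, div_eq_mul_inv, mul_inv]
  ring

lemma weylDim_addCell (lam : Fin d → ℕ) (hanti : ∀ i j : Fin d, i ≤ j → lam j ≤ lam i)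
    (a : Fin d) :
    weylDim d (addCell lam a)
      = weylDim d lam * (∏ j ∈ Finset.univ.erase a, (xc lam a + 1 - xc lam j))
        * (∏ j ∈ Finset.univ.erase a, (xc lam a - xc lam j))⁻¹ := by
  rw [addCell, weylDim_update lam hanti a (lam a + 1)]
  congr 2
  refine Finset.prod_congr rfl fun j _ => ?_
  simp only [xc]
  push_cast
  ring

lemma weylDim_removeCell (mu : Fin d → ℕ) (hanti : ∀ i j : Fin d, i ≤ j → mu j ≤ mu i)
    (r : Fin d) (h1 : 1 ≤ mu r) :
    weylDim d (removeCell mu r)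
      = weylDim d mu * (∏ j ∈ Finset.univ.erase r, (xc mu r + (-1) - xc mu j))
        * (∏ j ∈ Finset.univ.erase r, (xc mu r - xc mu j))⁻¹ := by
  rw [removeCell, weylDim_update mu hanti r (mu r - 1)]
  congr 2
  refine Finset.prod_congr rfl fun j _ => ?_
  have : ((mu r - 1 : ℕ) : ℚ) = (mu r : ℚ) - 1 := by
    rw [Nat.cast_sub h1]; norm_num
  rw [this]
  simp only [xc]
  ring

lemma weylDim_zero_pair (mu : Fin d → ℕ) (p q : Fin d) (hpq : p < q)
    (h : (mu p : ℚ) + q.1 = (mu q : ℚ) + p.1) : weylDim d mu = 0 := by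
  rw [weylDim]
  refine Finset.prod_eq_zero (i := (p, q)) ?_ ?_
  · simp only [Finset.mem_filter, Finset.mem_univ, true_and]; exact hpq
  · have hnum : ((mu p : ℚ) - (mu q : ℚ)) + (q.1 : ℚ) - (p.1 : ℚ) = 0 := by linarith
    rw [hnum, zero_div]

lemma addCell_vanish (lam : Fin d → ℕ) (hanti : ∀ i j : Fin d, i ≤ j → lam j ≤ lam i)
    (a : Fin d) (ha : a ∉ AC d lam) : weylDim d (addCell lam a) = 0 := by
  simp only [AC, Finset.mem_filter, Finset.mem_univ, true_and, not_forall] at ha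
  obtain ⟨j, hj, hnlt⟩ := ha
  have hj1 : (0 : ℕ) < a.1 := lt_of_le_of_lt (Nat.zero_le j.1) hj
  set p : Fin d := ⟨a.1 - 1, by omega⟩ with hp
  have hpa : p < a := by rw [Fin.lt_def]; simp [hp]; omega
  have hjp : j ≤ p := by rw [Fin.le_def]; simp [hp]; have := (Fin.lt_def.mp hj); omega
  have h1 : lam p ≤ lam j := hanti j p hjp
  have h2 : lam j ≤ lam a := le_of_not_gt hnlt
  have h3 : lam a ≤ lam p := hanti p a (le_of_lt hpa)
  have heq : lam p = lam a := le_antisymm (le_trans h1 h2) h3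
  apply weylDim_zero_pair (addCell lam a) p a hpa
  have hup : addCell lam a p = lam p := Function.update_of_ne (ne_of_lt hpa) _ _
  have hua : addCell lam a a = lam a + 1 := Function.update_self _ _ _
  rw [hup, hua, heq]
  have : (p.1 : ℚ) = (a.1 : ℚ) - 1 := by
    rw [hp]; push_cast [Nat.cast_sub (by omega : 1 ≤ a.1)]; ring
  rw [this]
  push_cast
  ring

lemma gauss : (∑ i : Fin d, (i.1 : ℚ)) = (d : ℚ) * ((d : ℚ) - 1) / 2 := by
  rcases Nat.eq_zero_or_pos d with rfl | hd
  · simp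
  · have h : (∑ i ∈ Finset.range d, i) * 2 = d * (d - 1) := Finset.sum_range_id_mul_two d
    have h2 : (∑ i : Fin d, (i.1 : ℚ)) = ((∑ i ∈ Finset.range d, i : ℕ) : ℚ) := by
      rw [Nat.cast_sum]
      exact Fin.sum_univ_eq_sum_range (fun i => (i : ℚ)) d
    rw [h2]
    have h3 : ((∑ i ∈ Finset.range d, i : ℕ) : ℚ) * 2 = (d : ℚ) * ((d : ℚ) - 1) := by
      have := congrArg (fun n : ℕ => (n : ℚ)) h
      push_cast [Nat.cast_sub hd] at this
      convert this using 2 <;> push_cast <;> ring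
    linarith

lemma sum_xc (lam : Fin d → ℕ) (M : ℕ) (hsum : ∑ i, lam i = M) :
    (∑ i, xc lam i) = (M : ℚ) - (d : ℚ) * ((d : ℚ) - 1) / 2 := by
  simp only [xc]
  rw [Finset.sum_sub_distrib, gauss]
  congr 1
  rw [← Nat.cast_sum, hsum]

lemma pieriA (hd : 0 < d) (lam : Fin d → ℕ) (hanti : ∀ i j : Fin d, i ≤ j → lam j ≤ lam i) :
    ∑ a ∈ AC d lam, weylDim d (addCell lam a) = (d : ℚ) * weylDim d lam := by
  have hext : ∑ a ∈ AC d lam, weylDim d (addCell lam a)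
      = ∑ a ∈ Finset.univ, weylDim d (addCell lam a) :=
    Finset.sum_subset (Finset.subset_univ _) fun a _ ha => addCell_vanish lam hanti a ha
  rw [hext]
  have hA := idA hd (xc lam) (xc_inj lam hanti) 1 one_ne_zero
  calc ∑ a, weylDim d (addCell lam a)
      = ∑ a, weylDim d lam * ((∏ j ∈ Finset.univ.erase a, (xc lam a + 1 - xc lam j))
          * (∏ j ∈ Finset.univ.erase a, (xc lam a - xc lam j))⁻¹) := by
        refine Finset.sum_congr rfl fun a _ => ?_
        rw [weylDim_addCell lam hanti a, mul_assoc]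
    _ = weylDim d lam * ∑ a, (∏ j ∈ Finset.univ.erase a, (xc lam a + 1 - xc lam j))
          * (∏ j ∈ Finset.univ.erase a, (xc lam a - xc lam j))⁻¹ := by
        rw [Finset.mul_sum]
    _ = (d : ℚ) * weylDim d lam := by rw [hA]; ring

lemma pieriB (hd : 0 < d) (lam : Fin d → ℕ) (hanti : ∀ i j : Fin d, i ≤ j → lam j ≤ lam i)
    (M : ℕ) (hsum : ∑ i, lam i = M) :
    ∑ a ∈ AC d lam, (xc lam a + (d : ℚ)) * weylDim d (addCell lam a)
      = ((M : ℚ) + (d : ℚ) ^ 2) * weylDim d lam := by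
  have hext : ∑ a ∈ AC d lam, (xc lam a + (d : ℚ)) * weylDim d (addCell lam a)
      = ∑ a ∈ Finset.univ, (xc lam a + (d : ℚ)) * weylDim d (addCell lam a) :=
    Finset.sum_subset (Finset.subset_univ _) fun a _ ha => by
      rw [addCell_vanish lam hanti a ha, mul_zero]
  rw [hext]
  have hW := idW hd (xc lam) (xc_inj lam hanti) (d : ℚ) 1 one_ne_zero
  have hsx := sum_xc lam M hsum
  calc ∑ a, (xc lam a + (d : ℚ)) * weylDim d (addCell lam a)
      = ∑ a, weylDim d lam * ((xc lam a + (d : ℚ))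
          * (∏ j ∈ Finset.univ.erase a, (xc lam a + 1 - xc lam j))
          * (∏ j ∈ Finset.univ.erase a, (xc lam a - xc lam j))⁻¹) := by
        refine Finset.sum_congr rfl fun a _ => ?_
        rw [weylDim_addCell lam hanti a]
        ring
    _ = weylDim d lam * ∑ a, (xc lam a + (d : ℚ))
          * (∏ j ∈ Finset.univ.erase a, (xc lam a + 1 - xc lam j))
          * (∏ j ∈ Finset.univ.erase a, (xc lam a - xc lam j))⁻¹ := by
        rw [Finset.mul_sum]
    _ = ((M : ℚ) + (d : ℚ) ^ 2) * weylDim d lam := by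
        rw [hW, hsx]
        ring

lemma removeCell_vanish (mu : Fin d → ℕ) (hd : 0 < d)
    (hanti : ∀ i j : Fin d, i ≤ j → mu j ≤ mu i)
    (r : Fin d) (hr : r ∉ RC d mu) :
    (xc mu r + ((d : ℚ) - 1))
      * (∏ j ∈ Finset.univ.erase r, (xc mu r + (-1) - xc mu j))
      * (∏ j ∈ Finset.univ.erase r, (xc mu r - xc mu j))⁻¹ = 0 := by
  simp only [RC, Finset.mem_filter, Finset.mem_univ, true_and, not_and_or, not_forall] at hr
  have hsucc : ∀ (hlt : r.1 + 1 < d), ((mu ⟨r.1 + 1, hlt⟩ = mu r) →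
      (xc mu r + ((d : ℚ) - 1))
      * (∏ j ∈ Finset.univ.erase r, (xc mu r + (-1) - xc mu j))
      * (∏ j ∈ Finset.univ.erase r, (xc mu r - xc mu j))⁻¹ = 0) := by
    intro hlt heq
    set s : Fin d := ⟨r.1 + 1, hlt⟩ with hs
    have hmem : s ∈ Finset.univ.erase r := by
      rw [Finset.mem_erase]
      refine ⟨?_, Finset.mem_univ _⟩
      rw [Fin.ne_iff_vne]; simp [hs]
    have hzero : xc mu r + (-1) - xc mu s = 0 := by
      simp only [xc, heq]
      simp only [hs]
      push_cast
      ring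
    rw [Finset.prod_eq_zero hmem hzero]
    ring
  rcases hr with h0 | ⟨j, hj, hnlt⟩
  · -- mu r = 0
    have h0' : mu r = 0 := by omega
    rcases Nat.lt_or_ge (r.1 + 1) d with hlt | hge
    · refine hsucc hlt ?_
      have := hanti r ⟨r.1 + 1, hlt⟩ (by rw [Fin.le_def]; exact Nat.le_succ _)
      omega
    · -- r is the last row: weight vanishes
      have hr1 : r.1 = d - 1 := by have := r.2; omega
      have : xc mu r + ((d : ℚ) - 1) = 0 := by
        simp only [xc, h0', hr1]
        push_cast [Nat.cast_sub hd]
        ring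
      rw [this]
      ring
  · -- ∃ j > r with mu j ≥ mu r
    have hjr : r < j := by exact hj
    have hlt : r.1 + 1 < d := by have := j.2; have := Fin.lt_def.mp hjr; omega
    refine hsucc hlt ?_
    set s : Fin d := ⟨r.1 + 1, hlt⟩ with hs
    have h1 : mu s ≤ mu r := hanti r s (by rw [Fin.le_def]; exact Nat.le_succ _)
    have h2 : mu j ≤ mu s := hanti s j (by rw [Fin.le_def]; exact Fin.lt_def.mp hjr)
    omega

lemma pieriC (hd : 0 < d) (mu : Fin d → ℕ) (hanti : ∀ i j : Fin d, i ≤ j → mu j ≤ mu i)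
    (M : ℕ) (hsum : ∑ i, mu i = M) :
    ∑ r ∈ RC d mu, (xc mu r + ((d : ℚ) - 1)) * weylDim d (removeCell mu r)
      = (M : ℚ) * weylDim d mu := by
  have hstep : ∑ r ∈ RC d mu, (xc mu r + ((d : ℚ) - 1)) * weylDim d (removeCell mu r)
      = ∑ r ∈ RC d mu, weylDim d mu * ((xc mu r + ((d : ℚ) - 1))
          * (∏ j ∈ Finset.univ.erase r, (xc mu r + (-1) - xc mu j))
          * (∏ j ∈ Finset.univ.erase r, (xc mu r - xc mu j))⁻¹) := by
    refine Finset.sum_congr rfl fun r hr => ?_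
    have hr1 : 1 ≤ mu r := by
      simp only [RC, Finset.mem_filter] at hr
      omega
    rw [weylDim_removeCell mu hanti r hr1]
    ring
  rw [hstep]
  have hext : ∑ r ∈ RC d mu, weylDim d mu * ((xc mu r + ((d : ℚ) - 1))
          * (∏ j ∈ Finset.univ.erase r, (xc mu r + (-1) - xc mu j))
          * (∏ j ∈ Finset.univ.erase r, (xc mu r - xc mu j))⁻¹)
      = ∑ r ∈ Finset.univ, weylDim d mu * ((xc mu r + ((d : ℚ) - 1))
          * (∏ j ∈ Finset.univ.erase r, (xc mu r + (-1) - xc mu j))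
          * (∏ j ∈ Finset.univ.erase r, (xc mu r - xc mu j))⁻¹) :=
    Finset.sum_subset (Finset.subset_univ _) fun r _ hr => by
      rw [removeCell_vanish mu hd hanti r hr, mul_zero]
  rw [hext]
  have hW := idW hd (xc mu) (xc_inj mu hanti) ((d : ℚ) - 1) (-1) (by norm_num)
  have hsx := sum_xc mu M hsum
  calc ∑ r, weylDim d mu * ((xc mu r + ((d : ℚ) - 1))
          * (∏ j ∈ Finset.univ.erase r, (xc mu r + (-1) - xc mu j))
          * (∏ j ∈ Finset.univ.erase r, (xc mu r - xc mu j))⁻¹)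
      = weylDim d mu * ∑ r, (xc mu r + ((d : ℚ) - 1))
          * (∏ j ∈ Finset.univ.erase r, (xc mu r + (-1) - xc mu j))
          * (∏ j ∈ Finset.univ.erase r, (xc mu r - xc mu j))⁻¹ := by
        rw [Finset.mul_sum]
    _ = (M : ℚ) * weylDim d mu := by
        rw [hW, hsx]
        ring

lemma mem_Ptn_iff (lam : Fin d → ℕ) (M : ℕ) :
    lam ∈ Ptn d M ↔ (∀ i j : Fin d, i ≤ j → lam j ≤ lam i) ∧ ∑ i, lam i = M := by
  unfold Ptn
  rw [Finset.mem_filter]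
  constructor
  · rintro ⟨_, h⟩; exact h
  · rintro ⟨h1, h2⟩
    refine ⟨?_, h1, h2⟩
    rw [Fintype.mem_piFinset]
    intro i
    rw [Finset.mem_range]
    have : lam i ≤ ∑ j, lam j := Finset.single_le_sum (fun j _ => Nat.zero_le _) (Finset.mem_univ i)
    omega

lemma mem_AC_iff (lam : Fin d → ℕ) (a : Fin d) :
    a ∈ AC d lam ↔ ∀ j : Fin d, j < a → lam a < lam j := by
  simp [AC]

lemma mem_RC_iff (mu : Fin d → ℕ) (r : Fin d) :
    r ∈ RC d mu ↔ 0 < mu r ∧ ∀ j : Fin d, r < j → mu j < mu r := by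
  simp [RC]

lemma addCell_mem (lam : Fin d → ℕ) (M : ℕ) (hmem : lam ∈ Ptn d M) (a : Fin d)
    (ha : a ∈ AC d lam) : addCell lam a ∈ Ptn d (M + 1) := by
  rw [mem_Ptn_iff] at hmem ⊢
  obtain ⟨hanti, hsum⟩ := hmem
  rw [mem_AC_iff] at ha
  constructor
  · intro i j hij
    simp only [addCell, Function.update_apply]
    split_ifs with h1 h2 h2
    · omega
    · have hia : i < a := lt_of_le_of_ne (h1 ▸ hij) h2
      have := ha i hia
      omega
    · have := hanti i j hij
      rw [h2] at this
      omega
    · exact hanti i j hij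
  · unfold addCell
    rw [Finset.sum_update_of_mem (Finset.mem_univ a), Finset.sdiff_singleton_eq_erase]
    have := Finset.add_sum_erase Finset.univ lam (Finset.mem_univ a)
    omega

lemma removeCell_mem (mu : Fin d → ℕ) (M : ℕ) (hmem : mu ∈ Ptn d (M + 1)) (r : Fin d)
    (hr : r ∈ RC d mu) : removeCell mu r ∈ Ptn d M := by
  rw [mem_Ptn_iff] at hmem ⊢
  obtain ⟨hanti, hsum⟩ := hmem
  rw [mem_RC_iff] at hr
  obtain ⟨hpos, hlt⟩ := hr
  constructor
  · intro i j hij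
    simp only [removeCell, Function.update_apply]
    split_ifs with h1 h2 h2
    · omega
    · have := hanti i j hij
      rw [h1] at this
      omega
    · have hrj : r < j := lt_of_le_of_ne (h2 ▸ hij) (Ne.symm h1)
      have := hlt j hrj
      omega
    · exact hanti i j hij
  · unfold removeCell
    rw [Finset.sum_update_of_mem (Finset.mem_univ r), Finset.sdiff_singleton_eq_erase]
    have := Finset.add_sum_erase Finset.univ mu (Finset.mem_univ r)
    omega

lemma add_remove (mu : Fin d → ℕ) (r : Fin d) (h1 : 1 ≤ mu r) :
    addCell (removeCell mu r) r = mu := by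
  funext j
  unfold addCell removeCell
  by_cases hj : j = r
  · subst hj
    rw [Function.update_self]
    simp only [Function.update_self]
    omega
  · rw [Function.update_of_ne hj, Function.update_of_ne hj]

lemma remove_add (lam : Fin d → ℕ) (a : Fin d) :
    removeCell (addCell lam a) a = lam := by
  funext j
  unfold addCell removeCell
  by_cases hj : j = a
  · subst hj
    rw [Function.update_self]
    simp only [Function.update_self]
    omega
  · rw [Function.update_of_ne hj, Function.update_of_ne hj]

lemma mem_RC_addCell (lam : Fin d → ℕ) (hanti : ∀ i j : Fin d, i ≤ j → lam j ≤ lam i)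
    (a : Fin d) (ha : a ∈ AC d lam) : a ∈ RC d (addCell lam a) := by
  rw [mem_RC_iff]
  unfold addCell
  constructor
  · rw [Function.update_self]; omega
  · intro j hj
    rw [Function.update_self, Function.update_of_ne (ne_of_gt hj)]
    have := hanti a j (le_of_lt hj)
    omega

lemma mem_AC_removeCell (mu : Fin d → ℕ) (hanti : ∀ i j : Fin d, i ≤ j → mu j ≤ mu i)
    (r : Fin d) (hr : r ∈ RC d mu) : r ∈ AC d (removeCell mu r) := by
  rw [mem_RC_iff] at hr
  rw [mem_AC_iff]
  intro j hj
  unfold removeCell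
  rw [Function.update_self, Function.update_of_ne (ne_of_lt hj)]
  have := hanti j r (le_of_lt hj)
  omega

lemma swap_sum (M : ℕ) (Φ : (Fin d → ℕ) → Fin d → ℚ) :
    ∑ lam ∈ Ptn d (M + 1), ∑ r ∈ RC d lam, Φ lam r
      = ∑ nu ∈ Ptn d M, ∑ a ∈ AC d nu, Φ (addCell nu a) a := by
  rw [Finset.sum_sigma', Finset.sum_sigma']
  refine Finset.sum_bij' (fun p hp => (⟨removeCell p.1 p.2, p.2⟩ : (_ : Fin d → ℕ) × Fin d))
    (fun p hp => (⟨addCell p.1 p.2, p.2⟩ : (_ : Fin d → ℕ) × Fin d))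
    ?_ ?_ ?_ ?_ ?_
  · intro p hp
    rw [Finset.mem_sigma] at hp ⊢
    obtain ⟨h1, h2⟩ := hp
    have hanti := ((mem_Ptn_iff p.1 (M+1)).mp h1).1
    exact ⟨removeCell_mem p.1 M h1 p.2 h2, mem_AC_removeCell p.1 hanti p.2 h2⟩
  · intro p hp
    rw [Finset.mem_sigma] at hp ⊢
    obtain ⟨h1, h2⟩ := hp
    have hanti := ((mem_Ptn_iff p.1 M).mp h1).1
    exact ⟨addCell_mem p.1 M h1 p.2 h2, mem_RC_addCell p.1 hanti p.2 h2⟩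
  · intro p hp
    rw [Finset.mem_sigma] at hp
    obtain ⟨h1, h2⟩ := hp
    have h1' : 1 ≤ p.1 p.2 := by
      rw [mem_RC_iff] at h2
      omega
    exact Sigma.ext (by simp [add_remove p.1 p.2 h1']) (by simp)
  · intro p hp
    exact Sigma.ext (by simp [remove_add p.1 p.2]) (by simp)
  · intro p hp
    rw [Finset.mem_sigma] at hp
    obtain ⟨h1, h2⟩ := hp
    have h1' : 1 ≤ p.1 p.2 := by
      rw [mem_RC_iff] at h2
      omega
    rw [add_remove p.1 p.2 h1']

lemma weylDim_pos (lam : Fin d → ℕ) (hanti : ∀ i j : Fin d, i ≤ j → lam j ≤ lam i) :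
    0 < weylDim d lam := by
  rw [weylDim]
  refine Finset.prod_pos fun p hp => ?_
  simp only [Finset.mem_filter, Finset.mem_univ, true_and] at hp
  have h1 : lam p.2 ≤ lam p.1 := hanti p.1 p.2 (le_of_lt hp)
  have h2 : (p.1.1 : ℕ) < p.2.1 := hp
  have h1' : (lam p.2 : ℚ) ≤ (lam p.1 : ℚ) := by exact_mod_cast h1
  have h2' : (p.1.1 : ℚ) < (p.2.1 : ℚ) := by exact_mod_cast h2
  apply div_pos <;> linarith

/-- sum of squared Weyl dimensions -/
def TT (d M : ℕ) : ℚ := ∑ mu ∈ Ptn d M, (weylDim d mu) ^ 2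

lemma Ptn_nonempty (hd : 0 < d) (M : ℕ) :
    ∃ lam, lam ∈ Ptn d M := by
  set z : Fin d := ⟨0, hd⟩ with hz
  refine ⟨fun i => if i = z then M else 0, ?_⟩
  rw [mem_Ptn_iff]
  constructor
  · intro i j hij
    split_ifs with h1 h2 h2
    · exact le_refl _
    · exfalso
      apply h2
      have hj0 : j.1 = 0 := by rw [h1, hz]
      have : i.1 = 0 := by have := Fin.le_def.mp hij; omega
      apply Fin.ext
      rw [this, hz]
    · exact Nat.zero_le _
    · exact le_refl _
  · simp

lemma TT_pos (hd : 0 < d) (M : ℕ) : 0 < TT d M := by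
  obtain ⟨lam, hlam⟩ := Ptn_nonempty hd M
  rw [TT]
  refine Finset.sum_pos' (fun mu hmu => sq_nonneg _) ⟨lam, hlam, ?_⟩
  have hanti := ((mem_Ptn_iff lam M).mp hlam).1
  exact pow_pos (weylDim_pos lam hanti) 2

lemma xc_addCell_self (nu : Fin d → ℕ) (a : Fin d) :
    xc (addCell nu a) a = xc nu a + 1 := by
  simp only [xc, addCell, Function.update_self]
  push_cast
  ring

lemma TT_rec (hd : 0 < d) (M : ℕ) :
    ((M : ℚ) + 1) * TT d (M + 1) = ((M : ℚ) + (d : ℚ) ^ 2) * TT d M := by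
  rw [TT, TT, Finset.mul_sum, Finset.mul_sum]
  have step1 : ∀ mu ∈ Ptn d (M + 1), ((M : ℚ) + 1) * (weylDim d mu) ^ 2
      = ∑ r ∈ RC d mu, ((xc mu r + ((d : ℚ) - 1)) * weylDim d (removeCell mu r))
          * weylDim d mu := by
    intro mu hmu
    obtain ⟨hanti, hsum⟩ := (mem_Ptn_iff mu (M + 1)).mp hmu
    have hC := pieriC hd mu hanti (M + 1) hsum
    rw [← Finset.sum_mul, hC]
    push_cast
    ring
  rw [Finset.sum_congr rfl step1]
  rw [swap_sum M (fun lam r => ((xc lam r + ((d : ℚ) - 1)) * weylDim d (removeCell lam r))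
    * weylDim d lam)]
  refine Finset.sum_congr rfl fun nu hnu => ?_
  obtain ⟨hanti, hsum⟩ := (mem_Ptn_iff nu M).mp hnu
  have hB := pieriB hd nu hanti M hsum
  calc ∑ a ∈ AC d nu, ((xc (addCell nu a) a + ((d : ℚ) - 1))
          * weylDim d (removeCell (addCell nu a) a)) * weylDim d (addCell nu a)
      = ∑ a ∈ AC d nu, ((xc nu a + (d : ℚ)) * weylDim d (addCell nu a)) * weylDim d nu := by
        refine Finset.sum_congr rfl fun a _ => ?_
        rw [xc_addCell_self, remove_add]
        ring
    _ = ((M : ℚ) + (d : ℚ) ^ 2) * (weylDim d nu) ^ 2 := by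
        rw [← Finset.sum_mul, hB]
        ring

end PBTAux

/-- Success probability of two-step pPBT with the optimal resource
`f_μ = m_μ²/∑ m_{μ'}²`:
`(1/d²)·∑_{λ⊢_d N-1} (∑_{a∈AC} f_{λ∪a}/m_{λ∪a}) (∑_{r∈RC} m_{λ∖r})
  = N(N−1)/((N+d²−1)(N+d²−2))`. -/
theorem stmt4 (d N : ℕ) (hd : 1 ≤ d) (hN : 2 ≤ N) :
    (1 / (d : ℚ) ^ 2) *
      ∑ lam ∈ PBT.Ptn d (N - 1),
        (∑ a ∈ PBT.AC d lam,
            ((PBT.weylDim d (PBT.addCell lam a)) ^ 2 /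
                ∑ μ ∈ PBT.Ptn d N, (PBT.weylDim d μ) ^ 2) /
              PBT.weylDim d (PBT.addCell lam a)) *
        (∑ r ∈ PBT.RC d lam, PBT.weylDim d (PBT.removeCell lam r)) =
    ((N : ℚ) * ((N : ℚ) - 1)) /
      (((N : ℚ) + (d : ℚ) ^ 2 - 1) * ((N : ℚ) + (d : ℚ) ^ 2 - 2)) := by
  classical
  obtain ⟨m, rfl⟩ : ∃ m, N = m + 2 := ⟨N - 2, by omega⟩
  have hd0 : 0 < d := hd
  have hN1 : m + 2 - 1 = m + 1 := by omega
  rw [hN1]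
  set S : ℚ := ∑ μ ∈ PBT.Ptn d (m + 2), (PBT.weylDim d μ) ^ 2 with hS
  have hS_TT : S = PBTAux.TT d (m + 2) := rfl
  have hS_pos : 0 < S := by rw [hS_TT]; exact PBTAux.TT_pos hd0 _
  have hS_ne : S ≠ 0 := ne_of_gt hS_pos
  have hd_ne : (d : ℚ) ≠ 0 := by
    have : (0 : ℚ) < d := by exact_mod_cast hd0
    exact ne_of_gt this
  -- inner simplification of the AC-sum
  have inner : ∀ lam ∈ PBT.Ptn d (m + 1),
      (∑ a ∈ PBT.AC d lam,
        ((PBT.weylDim d (PBT.addCell lam a)) ^ 2 / S) / PBT.weylDim d (PBT.addCell lam a))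
      = (d : ℚ) * PBT.weylDim d lam / S := by
    intro lam hlam
    have hanti := ((PBTAux.mem_Ptn_iff lam (m + 1)).mp hlam).1
    have h1 : ∀ a ∈ PBT.AC d lam,
        ((PBT.weylDim d (PBT.addCell lam a)) ^ 2 / S) / PBT.weylDim d (PBT.addCell lam a)
          = PBT.weylDim d (PBT.addCell lam a) / S := by
      intro a ha
      have hmem := PBTAux.addCell_mem lam (m + 1) hlam a ha
      have hanti' := ((PBTAux.mem_Ptn_iff _ (m + 2)).mp hmem).1
      have hw : PBT.weylDim d (PBT.addCell lam a) ≠ 0 :=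
        ne_of_gt (PBTAux.weylDim_pos _ hanti')
      rw [div_div, sq, mul_comm S, mul_div_mul_left _ _ hw]
    rw [Finset.sum_congr rfl h1, ← Finset.sum_div, PBTAux.pieriA hd0 lam hanti]
  have hsum1 : ∑ lam ∈ PBT.Ptn d (m + 1),
      (∑ a ∈ PBT.AC d lam,
        ((PBT.weylDim d (PBT.addCell lam a)) ^ 2 / S) / PBT.weylDim d (PBT.addCell lam a))
        * (∑ r ∈ PBT.RC d lam, PBT.weylDim d (PBT.removeCell lam r))
      = ∑ lam ∈ PBT.Ptn d (m + 1),
        ((d : ℚ) * PBT.weylDim d lam / S)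
          * (∑ r ∈ PBT.RC d lam, PBT.weylDim d (PBT.removeCell lam r)) :=
    Finset.sum_congr rfl fun lam hlam => by rw [inner lam hlam]
  rw [hsum1]
  -- swap the double sum
  have main : ∑ lam ∈ PBT.Ptn d (m + 1),
      ((d : ℚ) * PBT.weylDim d lam / S)
        * (∑ r ∈ PBT.RC d lam, PBT.weylDim d (PBT.removeCell lam r))
      = ((d : ℚ) / S) * ((d : ℚ) * PBTAux.TT d m) := by
    have h2 : ∑ lam ∈ PBT.Ptn d (m + 1),
        ((d : ℚ) * PBT.weylDim d lam / S)
          * (∑ r ∈ PBT.RC d lam, PBT.weylDim d (PBT.removeCell lam r))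
        = ((d : ℚ) / S) * ∑ lam ∈ PBT.Ptn d (m + 1),
            ∑ r ∈ PBT.RC d lam, PBT.weylDim d lam * PBT.weylDim d (PBT.removeCell lam r) := by
      rw [Finset.mul_sum]
      refine Finset.sum_congr rfl fun lam hlam => ?_
      rw [Finset.mul_sum, Finset.mul_sum]
      refine Finset.sum_congr rfl fun r hr => ?_
      ring
    rw [h2, PBTAux.swap_sum m
      (fun lam r => PBT.weylDim d lam * PBT.weylDim d (PBT.removeCell lam r))]
    congr 1
    have h3 : ∀ nu ∈ PBT.Ptn d m,
        ∑ a ∈ PBT.AC d nu,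
          PBT.weylDim d (PBT.addCell nu a)
            * PBT.weylDim d (PBT.removeCell (PBT.addCell nu a) a)
        = (d : ℚ) * (PBT.weylDim d nu) ^ 2 := by
      intro nu hnu
      have hanti := ((PBTAux.mem_Ptn_iff nu m).mp hnu).1
      calc ∑ a ∈ PBT.AC d nu, PBT.weylDim d (PBT.addCell nu a)
            * PBT.weylDim d (PBT.removeCell (PBT.addCell nu a) a)
          = ∑ a ∈ PBT.AC d nu, PBT.weylDim d (PBT.addCell nu a) * PBT.weylDim d nu := by
            refine Finset.sum_congr rfl fun a _ => ?_
            rw [PBTAux.remove_add]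
        _ = (d : ℚ) * (PBT.weylDim d nu) ^ 2 := by
            rw [← Finset.sum_mul, PBTAux.pieriA hd0 nu hanti]
            ring
    rw [Finset.sum_congr rfl h3, ← Finset.mul_sum]
    rfl
  rw [main]
  have hfin : (1 / (d : ℚ) ^ 2) * (((d : ℚ) / S) * ((d : ℚ) * PBTAux.TT d m))
      = PBTAux.TT d m / S := by
    field_simp
  rw [hfin, hS_TT]
  -- recursion and final algebra
  have r1 := PBTAux.TT_rec (d := d) hd0 m
  have r2 := PBTAux.TT_rec (d := d) hd0 (m + 1)
  push_cast at r1 r2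
  have key : ((m : ℚ) + 2) * ((m : ℚ) + 1) * PBTAux.TT d (m + 2)
      = ((m : ℚ) + 1 + (d : ℚ) ^ 2) * ((m : ℚ) + (d : ℚ) ^ 2) * PBTAux.TT d m := by
    linear_combination ((m : ℚ) + 1) * r2 + ((m : ℚ) + 1 + (d : ℚ) ^ 2) * r1
  have hd1 : (1 : ℚ) ≤ (d : ℚ) := by exact_mod_cast hd
  have hm0 : (0 : ℚ) ≤ (m : ℚ) := Nat.cast_nonneg m
  have hden1 : (0 : ℚ) < ((m : ℚ) + 2) + (d : ℚ) ^ 2 - 1 := by nlinarith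
  have hden2 : (0 : ℚ) < ((m : ℚ) + 2) + (d : ℚ) ^ 2 - 2 := by nlinarith
  have hT2_pos : 0 < PBTAux.TT d (m + 2) := PBTAux.TT_pos hd0 _
  push_cast
  rw [div_eq_div_iff (ne_of_gt hT2_pos) (ne_of_gt (mul_pos hden1 hden2))]
  linear_combination -key
end

section
/- For any d ≥ 1 and N ≥ 1, the double sum Σ_{λ ⊢_d N−1} m_λ (Σ_{r ∈ RC(λ)} m_{λ∖r}) equals d · Σ_{ν ⊢_d N−2} m_ν², where RC(λ) denotes the removable cells of λ. -/
open Finset BigOperators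

section StmtAux

open Polynomial

variable {d : ℕ}

/- ============ Lemma A: the Lagrange interpolation identity ============ -/

lemma stmt5_keyA (d : ℕ) (hd : 1 ≤ d) (x : Fin d → ℚ) (hx : Function.Injective x) :
    ∑ i : Fin d, ∏ j ∈ Finset.univ.erase i, (x i + 1 - x j) / (x i - x j) = d := by
  have hxne : ∀ i j : Fin d, i ≠ j → x i - x j ≠ 0 := by
    intro i j hij
    exact sub_ne_zero.mpr (fun h => hij (hx h))
  set p : ℚ[X] := ∏ j : Fin d, (X - C (x j)) with hp
  set q : ℚ[X] := ∏ j : Fin d, (X - C (x j - 1)) with hq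
  have hpm : p.Monic := monic_prod_of_monic _ _ fun j _ => monic_X_sub_C _
  have hqm : q.Monic := monic_prod_of_monic _ _ fun j _ => monic_X_sub_C _
  have hpd : p.natDegree = d := by
    rw [hp, natDegree_prod_of_monic _ _ fun j _ => monic_X_sub_C _]
    simp only [natDegree_X_sub_C, Finset.sum_const, card_univ, Fintype.card_fin, smul_eq_mul,
      mul_one]
  have hqd : q.natDegree = d := by
    rw [hq, natDegree_prod_of_monic _ _ fun j _ => monic_X_sub_C _]
    simp only [natDegree_X_sub_C, Finset.sum_const, card_univ, Fintype.card_fin, smul_eq_mul,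
      mul_one]
  set G : ℚ[X] := q - p with hG
  have hGdeg : G.degree < d := by
    have h1 : q.degree = p.degree := by
      rw [degree_eq_natDegree hqm.ne_zero, degree_eq_natDegree hpm.ne_zero, hqd, hpd]
    have h2 := degree_sub_lt h1 hqm.ne_zero (by rw [hqm.leadingCoeff, hpm.leadingCoeff])
    rwa [degree_eq_natDegree hqm.ne_zero, hqd] at h2
  have hcard : (0 : ℕ) < #(Finset.univ : Finset (Fin d)) := by rw [card_univ, Fintype.card_fin]; exact hd
  have hGcoeff : G.coeff (d - 1) = d := by
    have h1 : q.coeff (d - 1) = -∑ j : Fin d, (x j - 1) := by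
      have h := prod_X_sub_C_coeff_card_pred (Finset.univ : Finset (Fin d))
        (fun j => x j - 1) hcard
      rw [card_univ, Fintype.card_fin] at h
      exact h
    have h2 : p.coeff (d - 1) = -∑ j : Fin d, x j := by
      have h := prod_X_sub_C_coeff_card_pred (Finset.univ : Finset (Fin d)) x hcard
      rw [card_univ, Fintype.card_fin] at h
      exact h
    rw [hG, coeff_sub, h1, h2, Finset.sum_sub_distrib]
    simp [card_univ]
  have hinj : Set.InjOn x (Finset.univ : Finset (Fin d)) := hx.injOn
  have hGint : G = Lagrange.interpolate Finset.univ x (fun i => G.eval (x i)) := by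
    apply Lagrange.eq_interpolate hinj
    simpa using hGdeg
  have hbasis : ∀ i : Fin d, (Lagrange.basis Finset.univ x i).coeff (d - 1)
      = ∏ j ∈ Finset.univ.erase i, (x i - x j)⁻¹ := by
    intro i
    have hsplit : Lagrange.basis Finset.univ x i
        = C (∏ j ∈ Finset.univ.erase i, (x i - x j)⁻¹)
          * ∏ j ∈ Finset.univ.erase i, (X - C (x j)) := by
      rw [Lagrange.basis]
      simp only [Lagrange.basisDivisor]
      rw [Finset.prod_mul_distrib, map_prod]
    have hmon : (∏ j ∈ Finset.univ.erase i, (X - C (x j))).Monic :=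
      monic_prod_of_monic _ _ fun j _ => monic_X_sub_C _
    have hdeg : (∏ j ∈ Finset.univ.erase i, (X - C (x j))).natDegree = d - 1 := by
      rw [natDegree_prod_of_monic _ _ fun j _ => monic_X_sub_C _]
      simp [natDegree_X_sub_C, Finset.card_erase_of_mem]
    rw [hsplit, coeff_C_mul, ← hdeg, hmon.coeff_natDegree, mul_one]
  have hfinal := congrArg (fun P : ℚ[X] => P.coeff (d - 1)) hGint
  simp only [Lagrange.interpolate_apply, finset_sum_coeff, coeff_C_mul] at hfinal
  rw [hGcoeff] at hfinal
  rw [hfinal]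
  refine Finset.sum_congr rfl fun i _ => ?_
  rw [hbasis i]
  have hevalp : p.eval (x i) = 0 := by
    rw [hp, eval_prod]
    exact Finset.prod_eq_zero (Finset.mem_univ i) (by simp)
  have hevalq : q.eval (x i) = ∏ j ∈ Finset.univ.erase i, (x i + 1 - x j) := by
    rw [hq, eval_prod]
    rw [← Finset.mul_prod_erase _ _ (Finset.mem_univ i)]
    simp only [eval_sub, eval_X, eval_C]
    rw [show x i - (x i - 1) = 1 by ring, one_mul]
    refine Finset.prod_congr rfl fun j _ => by ring
  have : G.eval (x i) = ∏ j ∈ Finset.univ.erase i, (x i + 1 - x j) := by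
    rw [hG, eval_sub, hevalp, hevalq, sub_zero]
  rw [this, ← Finset.prod_mul_distrib]
  refine Finset.prod_congr rfl fun j hj => ?_
  rw [div_eq_mul_inv]

/- ============ Lemma B: product splitting ============ -/

def stmt5_wprod (d : ℕ) (x : Fin d → ℚ) : ℚ :=
  ∏ p ∈ Finset.univ.filter (fun p : Fin d × Fin d => p.1 < p.2),
    (x p.1 - x p.2) / ((p.2.1 : ℚ) - (p.1.1 : ℚ))

def stmt5_pairWith (i j : Fin d) : Fin d × Fin d := if j < i then (j, i) else (i, j)

lemma stmt5_pairWith_other (i : Fin d) (p : Fin d × Fin d)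
    (hp : p ∈ (Finset.univ.filter (fun p : Fin d × Fin d => p.1 < p.2)).filter
        (fun p => p.1 = i ∨ p.2 = i)) :
    stmt5_pairWith i (if p.1 = i then p.2 else p.1) = p := by
  simp only [Finset.mem_filter, Finset.mem_univ, true_and] at hp
  obtain ⟨hab, h⟩ := hp
  unfold stmt5_pairWith
  rcases h with h | h
  · rw [if_pos h]
    rw [if_neg (not_lt.mpr (le_of_lt (h ▸ hab)))]
    rw [← h]
  · have hne : p.1 ≠ i := fun he => absurd (he ▸ h ▸ hab) (lt_irrefl _)
    rw [if_neg hne, if_pos (h ▸ hab), ← h]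

lemma stmt5_other_mem (i : Fin d) (p : Fin d × Fin d)
    (hp : p ∈ (Finset.univ.filter (fun p : Fin d × Fin d => p.1 < p.2)).filter
        (fun p => p.1 = i ∨ p.2 = i)) :
    (if p.1 = i then p.2 else p.1) ∈ Finset.univ.erase i := by
  simp only [Finset.mem_filter, Finset.mem_univ, true_and] at hp
  obtain ⟨hab, h⟩ := hp
  rcases h with h | h
  · rw [if_pos h]
    exact Finset.mem_erase.mpr ⟨ne_of_gt (h ▸ hab), Finset.mem_univ _⟩
  · have hne : p.1 ≠ i := fun he => absurd (he ▸ h ▸ hab) (lt_irrefl _)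
    rw [if_neg hne]
    exact Finset.mem_erase.mpr ⟨fun he => hne (he ▸ rfl), Finset.mem_univ _⟩

lemma stmt5_pairWith_mem (i j : Fin d) (hj : j ≠ i) :
    stmt5_pairWith i j ∈ (Finset.univ.filter (fun p : Fin d × Fin d => p.1 < p.2)).filter
        (fun p => p.1 = i ∨ p.2 = i) := by
  unfold stmt5_pairWith
  rcases lt_or_gt_of_ne hj with h | h
  · rw [if_pos h]
    exact Finset.mem_filter.mpr ⟨Finset.mem_filter.mpr ⟨Finset.mem_univ _, h⟩, Or.inr rfl⟩
  · rw [if_neg (not_lt.mpr h.le)]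
    exact Finset.mem_filter.mpr ⟨Finset.mem_filter.mpr ⟨Finset.mem_univ _, h⟩, Or.inl rfl⟩

lemma stmt5_other_pairWith (i j : Fin d) (hj : j ≠ i) :
    (if (stmt5_pairWith i j).1 = i then (stmt5_pairWith i j).2 else (stmt5_pairWith i j).1)
      = j := by
  unfold stmt5_pairWith
  rcases lt_or_gt_of_ne hj with h | h
  · rw [if_pos h]
    simp only []
    rw [if_neg hj]
  · rw [if_neg (not_lt.mpr h.le)]
    simp

lemma stmt5_prod_pairs_with (i : Fin d) (g : Fin d × Fin d → ℚ) :
    ∏ p ∈ (Finset.univ.filter (fun p : Fin d × Fin d => p.1 < p.2)).filter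
        (fun p => p.1 = i ∨ p.2 = i), g p
      = ∏ j ∈ Finset.univ.erase i, g (stmt5_pairWith i j) := by
  refine Finset.prod_nbij' (fun p => if p.1 = i then p.2 else p.1) (stmt5_pairWith i)
    (fun p hp => stmt5_other_mem i p hp)
    (fun j hj => stmt5_pairWith_mem i j (Finset.mem_erase.mp hj).1)
    (fun p hp => stmt5_pairWith_other i p hp)
    (fun j hj => stmt5_other_pairWith i j (Finset.mem_erase.mp hj).1)
    (fun p hp => ?_)
  rw [stmt5_pairWith_other i p hp]

lemma stmt5_wprod_update (x : Fin d → ℚ) (hx : ∀ p q : Fin d, p < q → x q < x p) (i : Fin d) :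
    stmt5_wprod d (Function.update x i (x i + 1))
      = stmt5_wprod d x * ∏ j ∈ Finset.univ.erase i, (x i + 1 - x j) / (x i - x j) := by
  classical
  set y := Function.update x i (x i + 1) with hy
  have hyi : y i = x i + 1 := Function.update_self _ _ _
  have hyj : ∀ j : Fin d, j ≠ i → y j = x j := fun j hj => Function.update_of_ne hj _ _
  set P := Finset.univ.filter (fun p : Fin d × Fin d => p.1 < p.2) with hP
  have hsplit : ∀ z : Fin d → ℚ,
      stmt5_wprod d z = (∏ p ∈ P.filter (fun p => p.1 = i ∨ p.2 = i),
          (z p.1 - z p.2) / ((p.2.1 : ℚ) - (p.1.1 : ℚ)))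
        * ∏ p ∈ P.filter (fun p => ¬(p.1 = i ∨ p.2 = i)),
          (z p.1 - z p.2) / ((p.2.1 : ℚ) - (p.1.1 : ℚ)) := by
    intro z
    rw [stmt5_wprod, ← hP, Finset.prod_filter_mul_prod_filter_not]
  rw [hsplit y, hsplit x]
  have huntouched : ∏ p ∈ P.filter (fun p => ¬(p.1 = i ∨ p.2 = i)),
      (y p.1 - y p.2) / ((p.2.1 : ℚ) - (p.1.1 : ℚ))
      = ∏ p ∈ P.filter (fun p => ¬(p.1 = i ∨ p.2 = i)),
      (x p.1 - x p.2) / ((p.2.1 : ℚ) - (p.1.1 : ℚ)) := by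
    refine Finset.prod_congr rfl fun p hp => ?_
    simp only [Finset.mem_filter, not_or] at hp
    rw [hyj _ hp.2.1, hyj _ hp.2.2]
  have htouched : ∏ p ∈ P.filter (fun p => p.1 = i ∨ p.2 = i),
      (y p.1 - y p.2) / ((p.2.1 : ℚ) - (p.1.1 : ℚ))
      = (∏ p ∈ P.filter (fun p => p.1 = i ∨ p.2 = i),
          (x p.1 - x p.2) / ((p.2.1 : ℚ) - (p.1.1 : ℚ)))
        * ∏ j ∈ Finset.univ.erase i, (x i + 1 - x j) / (x i - x j) := by
    rw [hP, stmt5_prod_pairs_with, stmt5_prod_pairs_with, ← Finset.prod_mul_distrib]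
    refine Finset.prod_congr rfl fun j hj => ?_
    have hji : j ≠ i := (Finset.mem_erase.mp hj).1
    unfold stmt5_pairWith
    rcases lt_or_gt_of_ne hji with h | h
    · rw [if_pos h]
      simp only []
      rw [hyj j hji, hyi]
      have hc : (i.1 : ℚ) - (j.1 : ℚ) ≠ 0 := by
        have : (j.1 : ℚ) < (i.1 : ℚ) := by exact_mod_cast h
        linarith
      have ha : x i - x j ≠ 0 := by
        have := hx j i h
        linarith
      field_simp
      ring
    · rw [if_neg (not_lt.mpr h.le)]
      simp only []
      rw [hyj j hji, hyi]
      have hc : (j.1 : ℚ) - (i.1 : ℚ) ≠ 0 := by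
        have : (i.1 : ℚ) < (j.1 : ℚ) := by exact_mod_cast h
        linarith
      have ha : x i - x j ≠ 0 := by
        have := hx i j h
        linarith
      field_simp
  rw [huntouched, htouched]
  ring

/- ============ Bridge to weylDim ============ -/

lemma stmt5_weylDim_eq_wprod (lam : Fin d → ℕ) :
    PBT.weylDim d lam = stmt5_wprod d (fun k => (lam k : ℚ) - (k.1 : ℚ)) := by
  refine Finset.prod_congr rfl fun p _ => ?_
  congr 1
  ring

lemma stmt5_X_strictdec {lam : Fin d → ℕ} (hanti : ∀ i j : Fin d, i ≤ j → lam j ≤ lam i) :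
    ∀ p q : Fin d, p < q →
      ((lam q : ℚ) - (q.1 : ℚ)) < ((lam p : ℚ) - (p.1 : ℚ)) := by
  intro p q hpq
  have h1 : lam q ≤ lam p := hanti p q hpq.le
  have h2 : (p.1 : ℚ) < (q.1 : ℚ) := by exact_mod_cast hpq
  have h3 : (lam q : ℚ) ≤ (lam p : ℚ) := by exact_mod_cast h1
  linarith

lemma stmt5_X_inj {lam : Fin d → ℕ} (hanti : ∀ i j : Fin d, i ≤ j → lam j ≤ lam i) :
    Function.Injective (fun k : Fin d => (lam k : ℚ) - (k.1 : ℚ)) := by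
  intro a b hab
  have hab' : (lam a : ℚ) - (a.1 : ℚ) = (lam b : ℚ) - (b.1 : ℚ) := hab
  by_contra hne
  rcases lt_or_gt_of_ne hne with h | h
  · exact absurd hab' (ne_of_gt (stmt5_X_strictdec hanti a b h))
  · exact absurd hab'.symm (ne_of_gt (stmt5_X_strictdec hanti b a h))

lemma stmt5_addCell_cast (lam : Fin d → ℕ) (i : Fin d) :
    (fun k : Fin d => ((PBT.addCell lam i) k : ℚ) - (k.1 : ℚ))
      = Function.update (fun k : Fin d => (lam k : ℚ) - (k.1 : ℚ)) i
          ((lam i : ℚ) - (i.1 : ℚ) + 1) := by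
  funext k
  by_cases hk : k = i
  · subst hk
    rw [Function.update_self]
    simp only [PBT.addCell, Function.update_self]
    push_cast
    ring
  · rw [Function.update_of_ne hk]
    simp only [PBT.addCell, Function.update_of_ne hk]

/-- Pieri rule: summing the Weyl dimension over all single-cell additions. -/
lemma stmt5_pieri (hd : 1 ≤ d) (lam : Fin d → ℕ)
    (hanti : ∀ i j : Fin d, i ≤ j → lam j ≤ lam i) :
    ∑ i : Fin d, PBT.weylDim d (PBT.addCell lam i) = d * PBT.weylDim d lam := by
  set X : Fin d → ℚ := fun k => (lam k : ℚ) - (k.1 : ℚ) with hX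
  have hdec := stmt5_X_strictdec hanti
  have step : ∀ i : Fin d, PBT.weylDim d (PBT.addCell lam i)
      = PBT.weylDim d lam * ∏ j ∈ Finset.univ.erase i, (X i + 1 - X j) / (X i - X j) := by
    intro i
    rw [stmt5_weylDim_eq_wprod, stmt5_addCell_cast, stmt5_weylDim_eq_wprod lam]
    exact stmt5_wprod_update X hdec i
  calc ∑ i : Fin d, PBT.weylDim d (PBT.addCell lam i)
      = ∑ i : Fin d, PBT.weylDim d lam
          * ∏ j ∈ Finset.univ.erase i, (X i + 1 - X j) / (X i - X j) :=
        Finset.sum_congr rfl fun i _ => step i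
    _ = PBT.weylDim d lam
          * ∑ i : Fin d, ∏ j ∈ Finset.univ.erase i, (X i + 1 - X j) / (X i - X j) := by
        rw [Finset.mul_sum]
    _ = PBT.weylDim d lam * d := by
        rw [stmt5_keyA d hd X (stmt5_X_inj hanti)]
    _ = d * PBT.weylDim d lam := mul_comm _ _


/- ============ Combinatorial lemmas ============ -/

lemma stmt5_mem_Ptn {d N : ℕ} {lam : Fin d → ℕ} :
    lam ∈ PBT.Ptn d N ↔ ((∀ i j : Fin d, i ≤ j → lam j ≤ lam i) ∧ ∑ i, lam i = N) := by
  constructor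
  · intro h; exact (Finset.mem_filter.mp h).2
  · intro h
    refine Finset.mem_filter.mpr ⟨?_, h⟩
    rw [Fintype.mem_piFinset]
    intro i
    rw [Finset.mem_range]
    have : lam i ≤ ∑ j, lam j :=
      Finset.single_le_sum (fun j _ => Nat.zero_le _) (Finset.mem_univ i)
    omega

lemma stmt5_mem_RC {d : ℕ} {lam : Fin d → ℕ} {r : Fin d} :
    r ∈ PBT.RC d lam ↔ (0 < lam r ∧ ∀ j : Fin d, r < j → lam j < lam r) := by
  rw [PBT.RC, Finset.mem_filter]
  simp

lemma stmt5_mem_AC {d : ℕ} {lam : Fin d → ℕ} {a : Fin d} :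
    a ∈ PBT.AC d lam ↔ (∀ j : Fin d, j < a → lam a < lam j) := by
  rw [PBT.AC, Finset.mem_filter]
  simp

lemma stmt5_remove_mem {d N : ℕ} (hN : 2 ≤ N) {lam : Fin d → ℕ} {r : Fin d}
    (hlam : lam ∈ PBT.Ptn d (N - 1)) (hr : r ∈ PBT.RC d lam) :
    PBT.removeCell lam r ∈ PBT.Ptn d (N - 2) := by
  obtain ⟨hanti, hsum⟩ := stmt5_mem_Ptn.mp hlam
  obtain ⟨hpos, hdesc⟩ := stmt5_mem_RC.mp hr
  refine stmt5_mem_Ptn.mpr ⟨?_, ?_⟩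
  · intro i j hij
    simp only [PBT.removeCell, Function.update_apply]
    split_ifs with h1 h2 h2
    · omega
    · have : lam r ≤ lam i := hanti i r (h1 ▸ hij)
      omega
    · have hrj : r < j := lt_of_le_of_ne (h2 ▸ hij) (fun he => h1 he.symm)
      have := hdesc j hrj
      omega
    · exact hanti i j hij
  · rw [show PBT.removeCell lam r = Function.update lam r (lam r - 1) from rfl,
      Finset.sum_update_of_mem (Finset.mem_univ r)]
    have hS := Finset.add_sum_erase Finset.univ lam (Finset.mem_univ r)
    rw [← Finset.sdiff_singleton_eq_erase] at hS
    omega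

lemma stmt5_add_mem {d N : ℕ} (hN : 2 ≤ N) {v : Fin d → ℕ} {a : Fin d}
    (hv : v ∈ PBT.Ptn d (N - 2)) (ha : a ∈ PBT.AC d v) :
    PBT.addCell v a ∈ PBT.Ptn d (N - 1) := by
  obtain ⟨hanti, hsum⟩ := stmt5_mem_Ptn.mp hv
  have hasc := stmt5_mem_AC.mp ha
  refine stmt5_mem_Ptn.mpr ⟨?_, ?_⟩
  · intro i j hij
    simp only [PBT.addCell, Function.update_apply]
    split_ifs with h1 h2 h2
    · omega
    · have hia : i < a := lt_of_le_of_ne (h1 ▸ hij) h2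
      have := hasc i hia
      omega
    · have : v j ≤ v a := h2 ▸ hanti i j hij
      omega
    · exact hanti i j hij
  · rw [show PBT.addCell v a = Function.update v a (v a + 1) from rfl,
      Finset.sum_update_of_mem (Finset.mem_univ a)]
    have hS := Finset.add_sum_erase Finset.univ v (Finset.mem_univ a)
    rw [← Finset.sdiff_singleton_eq_erase] at hS
    omega

lemma stmt5_AC_remove {d : ℕ} {lam : Fin d → ℕ} {r : Fin d}
    (hanti : ∀ i j : Fin d, i ≤ j → lam j ≤ lam i) (hr : r ∈ PBT.RC d lam) :
    r ∈ PBT.AC d (PBT.removeCell lam r) := by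
  obtain ⟨hpos, _⟩ := stmt5_mem_RC.mp hr
  refine stmt5_mem_AC.mpr fun j hj => ?_
  rw [show (PBT.removeCell lam r) r = lam r - 1 from Function.update_self _ _ _,
    show (PBT.removeCell lam r) j = lam j from Function.update_of_ne (ne_of_lt hj) _ _]
  have := hanti j r hj.le
  omega

lemma stmt5_RC_add {d : ℕ} {v : Fin d → ℕ} {a : Fin d}
    (hanti : ∀ i j : Fin d, i ≤ j → v j ≤ v i) :
    a ∈ PBT.RC d (PBT.addCell v a) := by
  refine stmt5_mem_RC.mpr ⟨?_, fun j hj => ?_⟩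
  · simp [PBT.addCell]
  · rw [show (PBT.addCell v a) a = v a + 1 from Function.update_self _ _ _,
      show (PBT.addCell v a) j = v j from Function.update_of_ne (ne_of_gt hj) _ _]
    have := hanti a j hj.le
    omega

lemma stmt5_add_remove {d : ℕ} {lam : Fin d → ℕ} {r : Fin d} (hpos : 0 < lam r) :
    PBT.addCell (PBT.removeCell lam r) r = lam := by
  funext x
  simp only [PBT.addCell, PBT.removeCell, Function.update_apply]
  split_ifs with h
  · subst h; omega
  · rfl

lemma stmt5_remove_add {d : ℕ} (v : Fin d → ℕ) (a : Fin d) :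
    PBT.removeCell (PBT.addCell v a) a = v := by
  funext x
  simp only [PBT.addCell, PBT.removeCell, Function.update_apply]
  split_ifs with h
  · subst h; simp
  · rfl

lemma stmt5_vanish {d : ℕ} {lam : Fin d → ℕ}
    (hanti : ∀ i j : Fin d, i ≤ j → lam j ≤ lam i) (i : Fin d)
    (hi : i ∉ PBT.AC d lam) :
    PBT.weylDim d (PBT.addCell lam i) = 0 := by
  have hnot : ¬ (∀ j : Fin d, j < i → lam i < lam j) :=
    fun h => hi (stmt5_mem_AC.mpr h)
  push_neg at hnot
  obtain ⟨j, hj, hle⟩ := hnot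
  have hipos : 0 < i.1 := lt_of_le_of_lt (Nat.zero_le _) hj
  set i' : Fin d := ⟨i.1 - 1, Nat.lt_of_le_of_lt (Nat.sub_le _ _) i.isLt⟩ with hi'
  have hi'lt : i' < i := by
    rw [Fin.lt_def]
    simp only [hi']
    omega
  have hji' : j ≤ i' := by
    rw [Fin.le_def]
    simp only [hi']
    have := (Fin.lt_def.mp hj)
    omega
  have h1 : lam i ≤ lam i' := hanti i' i hi'lt.le
  have h2 : lam i' ≤ lam j := hanti j i' hji'
  have heq : lam i' = lam i := le_antisymm (le_trans h2 hle) h1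
  rw [PBT.weylDim]
  apply Finset.prod_eq_zero (i := ((i', i) : Fin d × Fin d))
  · exact Finset.mem_filter.mpr ⟨Finset.mem_univ _, hi'lt⟩
  · have hvi' : PBT.addCell lam i i' = lam i' :=
      Function.update_of_ne (ne_of_lt hi'lt) _ _
    have hvi : PBT.addCell lam i i = lam i + 1 := Function.update_self _ _ _
    rw [_root_.div_eq_zero_iff]
    left
    rw [hvi', hvi, heq]
    have hcast : (i.1 : ℚ) - (i'.1 : ℚ) = 1 := by
      simp only [hi']
      rw [Nat.cast_sub (by omega : 1 ≤ i.1)]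
      push_cast
      ring
    push_cast
    linarith


end StmtAux


/-- `∑_{λ⊢_d N−1} m_λ (∑_{r∈RC(λ)} m_{λ∖r}) = d · ∑_{ν⊢_d N−2} m_ν²`. -/
theorem stmt5 (d N : ℕ) (hd : 1 ≤ d) (hN : 2 ≤ N) :
    ∑ lam ∈ PBT.Ptn d (N - 1),
      PBT.weylDim d lam * ∑ r ∈ PBT.RC d lam, PBT.weylDim d (PBT.removeCell lam r) =
    (d : ℚ) * ∑ ν ∈ PBT.Ptn d (N - 2), (PBT.weylDim d ν) ^ 2 := by
  classical
  have step1 : ∑ lam ∈ PBT.Ptn d (N - 1),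
      PBT.weylDim d lam * ∑ r ∈ PBT.RC d lam, PBT.weylDim d (PBT.removeCell lam r)
      = ∑ p ∈ (PBT.Ptn d (N - 1)).sigma (fun lam => PBT.RC d lam),
          PBT.weylDim d p.1 * PBT.weylDim d (PBT.removeCell p.1 p.2) := by
    rw [Finset.sum_sigma]
    exact Finset.sum_congr rfl fun lam _ => Finset.mul_sum _ _ _
  have step2 : ∑ p ∈ (PBT.Ptn d (N - 1)).sigma (fun lam => PBT.RC d lam),
      PBT.weylDim d p.1 * PBT.weylDim d (PBT.removeCell p.1 p.2)
      = ∑ p ∈ (PBT.Ptn d (N - 2)).sigma (fun v => PBT.AC d v),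
          PBT.weylDim d (PBT.addCell p.1 p.2) * PBT.weylDim d p.1 := by
    refine Finset.sum_nbij' (fun p => ⟨PBT.removeCell p.1 p.2, p.2⟩)
      (fun p => ⟨PBT.addCell p.1 p.2, p.2⟩) ?_ ?_ ?_ ?_ ?_
    · rintro ⟨lam, r⟩ hp
      rw [Finset.mem_sigma] at hp ⊢
      obtain ⟨hlam, hr⟩ := hp
      exact ⟨stmt5_remove_mem hN hlam hr,
        stmt5_AC_remove (stmt5_mem_Ptn.mp hlam).1 hr⟩
    · rintro ⟨v, a⟩ hp
      rw [Finset.mem_sigma] at hp ⊢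
      obtain ⟨hv, ha⟩ := hp
      exact ⟨stmt5_add_mem hN hv ha, stmt5_RC_add (stmt5_mem_Ptn.mp hv).1⟩
    · rintro ⟨lam, r⟩ hp
      rw [Finset.mem_sigma] at hp
      have hpos : 0 < lam r := (stmt5_mem_RC.mp hp.2).1
      simp only [Sigma.mk.inj_iff, heq_eq_eq]
      exact ⟨stmt5_add_remove hpos, trivial⟩
    · rintro ⟨v, a⟩ hp
      simp only [Sigma.mk.inj_iff, heq_eq_eq]
      exact ⟨stmt5_remove_add v a, trivial⟩
    · rintro ⟨lam, r⟩ hp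
      rw [Finset.mem_sigma] at hp
      have hpos : 0 < lam r := (stmt5_mem_RC.mp hp.2).1
      simp only []
      rw [stmt5_add_remove hpos, mul_comm]
  have step3 : ∑ p ∈ (PBT.Ptn d (N - 2)).sigma (fun v => PBT.AC d v),
      PBT.weylDim d (PBT.addCell p.1 p.2) * PBT.weylDim d p.1
      = ∑ v ∈ PBT.Ptn d (N - 2), (d : ℚ) * PBT.weylDim d v ^ 2 := by
    rw [Finset.sum_sigma]
    refine Finset.sum_congr rfl fun v hv => ?_
    have hanti := (stmt5_mem_Ptn.mp hv).1
    have hext : ∑ a ∈ PBT.AC d v, PBT.weylDim d (PBT.addCell v a)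
        = ∑ a : Fin d, PBT.weylDim d (PBT.addCell v a) :=
      Finset.sum_subset (Finset.subset_univ _)
        (fun i _ hi => stmt5_vanish hanti i hi)
    dsimp only
    rw [← Finset.sum_mul, hext, stmt5_pieri hd v hanti]
    ring
  rw [step1, step2, step3, Finset.mul_sum]
end

section
/- Schur–Weyl dimension identity: for all d ≥ 1 and N ≥ 0, Σ_{λ ⊢_d N} m_λ d_λ = d^N, where m_λ is the Weyl dimension of the U(d) irrep λ and d_λ is the number of standard Young tableaux of shape λ. -/
open Finset BigOperators

namespace SWaux
open PBT Polynomial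

lemma key_sum {d : ℕ} (hd : 0 < d) (x : Fin d → ℚ) (hx : Function.Injective x) :
    ∑ i : Fin d, (∏ j ∈ univ.erase i, (x i + 1 - x j)) * (∏ j ∈ univ.erase i, (x i - x j))⁻¹
      = d := by
  classical
  have hvs : Set.InjOn x (univ : Finset (Fin d)) := fun a _ b _ h => hx h
  have hcard : #(univ : Finset (Fin d)) = d := by simp
  set P : ℚ[X] := ∏ j : Fin d, (X - C (x j - 1)) with hP
  set Q : ℚ[X] := ∏ j : Fin d, (X - C (x j)) with hQ
  have hPm : P.Monic := monic_prod_of_monic _ _ (fun j _ => monic_X_sub_C _)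
  have hQm : Q.Monic := monic_prod_of_monic _ _ (fun j _ => monic_X_sub_C _)
  have hPdeg : P.natDegree = d := by
    rw [hP, natDegree_prod_of_monic _ _ fun j _ => monic_X_sub_C _]
    simp only [natDegree_X_sub_C]; simp
  have hQdeg : Q.natDegree = d := by
    rw [hQ, natDegree_prod_of_monic _ _ fun j _ => monic_X_sub_C _]
    simp only [natDegree_X_sub_C]; simp
  have hdeglt : (P - Q).degree < (#(univ : Finset (Fin d)) : ℕ) := by
    rw [hcard]
    have h1 : P.degree = Q.degree := by
      rw [degree_eq_natDegree hPm.ne_zero, degree_eq_natDegree hQm.ne_zero, hPdeg, hQdeg]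
    have := Polynomial.degree_sub_lt h1 hPm.ne_zero (by rw [hPm.leadingCoeff, hQm.leadingCoeff])
    rw [degree_eq_natDegree hPm.ne_zero, hPdeg] at this
    exact this
  have heval : ∀ i : Fin d, eval (x i) (P - Q) = ∏ j ∈ univ.erase i, (x i + 1 - x j) := by
    intro i
    have hQ0 : eval (x i) Q = 0 := by
      rw [hQ, eval_prod]; exact prod_eq_zero (mem_univ i) (by simp)
    rw [eval_sub, hQ0, sub_zero, hP, eval_prod]
    simp only [eval_sub, eval_X, eval_C]
    rw [← prod_erase_mul _ _ (mem_univ i), show x i - (x i - 1) = 1 from by ring, mul_one]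
    exact prod_congr rfl fun j _ => by ring
  have hfun : (fun i => eval (x i) (P - Q))
      = (fun i => ∏ j ∈ univ.erase i, (x i + 1 - x j)) := funext heval
  have hinterp := (Lagrange.eq_interpolate (f := P - Q) hvs hdeglt).symm
  rw [hfun] at hinterp
  have h1 := prod_X_sub_C_coeff_card_pred (univ : Finset (Fin d)) (fun j => x j - 1)
    (by simp [hd, hcard])
  have h2 := prod_X_sub_C_coeff_card_pred (univ : Finset (Fin d)) (fun j => x j)
    (by simp [hd, hcard])
  rw [hcard] at h1 h2
  have hcoeffL : (P - Q).coeff (d - 1) = d := by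
    rw [coeff_sub, hP, hQ, h1, h2, Finset.sum_sub_distrib]
    simp [hcard]
  have hcoeffR : (Lagrange.interpolate univ x
      (fun i => ∏ j ∈ univ.erase i, (x i + 1 - x j))).coeff (d - 1)
      = ∑ i : Fin d, (∏ j ∈ univ.erase i, (x i + 1 - x j)) * (∏ j ∈ univ.erase i, (x i - x j))⁻¹ := by
    rw [Lagrange.interpolate_apply, finset_sum_coeff]
    refine Finset.sum_congr rfl fun i _ => ?_
    have hbasis : Lagrange.basis univ x i
        = C (∏ j ∈ univ.erase i, (x i - x j)⁻¹) * ∏ j ∈ univ.erase i, (X - C (x j)) := by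
      rw [Lagrange.basis]
      simp_rw [Lagrange.basisDivisor]
      rw [prod_mul_distrib, map_prod]
    have hM : (∏ j ∈ univ.erase i, (X - C (x j))).coeff (d - 1) = 1 := by
      have hm : (∏ j ∈ univ.erase i, (X - C (x j))).Monic :=
        monic_prod_of_monic _ _ (fun j _ => monic_X_sub_C _)
      have hdeg : (∏ j ∈ univ.erase i, (X - C (x j))).natDegree = d - 1 := by
        rw [natDegree_prod_of_monic _ _ fun j _ => monic_X_sub_C _]
        simp only [natDegree_X_sub_C]
        simp [card_erase_of_mem, hcard]
      rw [← hdeg]; exact hm.coeff_natDegree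
    rw [hbasis, ← mul_assoc, ← map_mul, coeff_C_mul, hM, mul_one, prod_inv_distrib]
  rw [← hinterp, hcoeffR] at hcoeffL
  exact hcoeffL

noncomputable def xs {d : ℕ} (lam : Fin d → ℕ) (i : Fin d) : ℚ := (lam i : ℚ) - (i.1 : ℚ)

lemma xs_lt {d : ℕ} {lam : Fin d → ℕ} (h : ∀ i j : Fin d, i ≤ j → lam j ≤ lam i)
    {i j : Fin d} (hij : i < j) : xs lam j < xs lam i := by
  have h1 : lam j ≤ lam i := h i j (le_of_lt hij)
  have h2 : (i.1 : ℚ) < j.1 := by exact_mod_cast hij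
  have h3 : (lam j : ℚ) ≤ lam i := by exact_mod_cast h1
  unfold xs ; linarith

lemma xs_inj {d : ℕ} {lam : Fin d → ℕ} (h : ∀ i j : Fin d, i ≤ j → lam j ≤ lam i) :
    Function.Injective (xs lam) := by
  intro a b hab
  rcases lt_trichotomy a b with h1 | h1 | h1
  · exact absurd hab (ne_of_gt (xs_lt h h1))
  · exact h1
  · exact absurd hab (ne_of_lt (xs_lt h h1))

lemma weyl_mul (d : ℕ) (lam : Fin d → ℕ) (i : Fin d) :
    weylDim d (addCell lam i) * ∏ j ∈ univ.erase i, (xs lam i - xs lam j)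
      = weylDim d lam * ∏ j ∈ univ.erase i, (xs lam i + 1 - xs lam j) := by
  classical
  set S : Finset (Fin d × Fin d) := univ.filter (fun p : Fin d × Fin d => p.1 < p.2) with hS
  set pred : Fin d × Fin d → Prop := fun p => p.1 = i ∨ p.2 = i with hpred
  set f : (Fin d → ℕ) → Fin d × Fin d → ℚ := fun mu p =>
    (((mu p.1 : ℚ) - (mu p.2 : ℚ)) + (p.2.1 : ℚ) - (p.1.1 : ℚ)) / ((p.2.1 : ℚ) - (p.1.1 : ℚ)) with hf
  have hsplit : ∀ mu : Fin d → ℕ, weylDim d mu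
      = (∏ p ∈ S.filter pred, f mu p) * ∏ p ∈ S.filter (fun p => ¬ pred p), f mu p := by
    intro mu
    rw [prod_filter_mul_prod_filter_not]
    rfl
  have hsame : ∀ p ∈ S.filter (fun p => ¬ pred p), f (addCell lam i) p = f lam p := by
    intro p hp
    rcases mem_filter.mp hp with ⟨_, hnp⟩
    simp only [hpred, not_or] at hnp
    simp only [hf, addCell, Function.update_of_ne hnp.1, Function.update_of_ne hnp.2]
  -- the bijection between erase i and S.filter pred
  have hbij : ∀ F : Fin d × Fin d → ℚ,
      ∏ p ∈ S.filter pred, F p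
        = ∏ j ∈ univ.erase i, F (if j < i then (j, i) else (i, j)) := by
    intro F
    refine (Finset.prod_nbij' (fun j => if j < i then ((j, i) : Fin d × Fin d) else (i, j))
      (fun p => if p.2 = i then p.1 else p.2) ?_ ?_ ?_ ?_ (fun j hj => rfl)).symm
    · intro j hj
      have hji : j ≠ i := (mem_erase.mp hj).1
      rcases lt_or_gt_of_ne hji with hlt | hgt
      · rw [if_pos hlt]
        simp [hS, hpred, hlt, mem_filter]
      · rw [if_neg (not_lt.mpr (le_of_lt hgt))]
        simp [hS, hpred, hgt, mem_filter]
    · intro p hp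
      rcases mem_filter.mp hp with ⟨hpS, hpi⟩
      have hlt : p.1 < p.2 := by simpa [hS] using hpS
      by_cases h2 : p.2 = i
      · rw [if_pos h2]
        exact mem_erase.mpr ⟨fun hc => absurd (hc ▸ (h2 ▸ hlt : p.1 < i)) (lt_irrefl _), mem_univ _⟩
      · rw [if_neg h2]
        exact mem_erase.mpr ⟨h2, mem_univ _⟩
    · intro j hj
      have hji : j ≠ i := (mem_erase.mp hj).1
      rcases lt_or_gt_of_ne hji with hlt | hgt
      · rw [if_pos hlt]
        simp
      · rw [if_neg (not_lt.mpr (le_of_lt hgt))]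
        simp [hgt.ne']
    · intro p hp
      rcases mem_filter.mp hp with ⟨hpS, hpi⟩
      have hlt : p.1 < p.2 := by simpa [hS] using hpS
      simp only [hpred] at hpi
      by_cases h2 : p.2 = i
      · rw [if_pos h2, if_pos (h2 ▸ hlt)]
        exact Prod.ext rfl h2.symm
      · rw [if_neg h2]
        have h1 : p.1 = i := hpi.resolve_right h2
        rw [if_neg (not_lt.mpr (le_of_lt (h1 ▸ hlt)))]
        exact Prod.ext h1.symm rfl
  have hkey : (∏ j ∈ univ.erase i, f (addCell lam i) (if j < i then (j, i) else (i, j)))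
        * ∏ j ∈ univ.erase i, (xs lam i - xs lam j)
      = (∏ j ∈ univ.erase i, f lam (if j < i then (j, i) else (i, j)))
        * ∏ j ∈ univ.erase i, (xs lam i + 1 - xs lam j) := by
    rw [← prod_mul_distrib, ← prod_mul_distrib]
    refine prod_congr rfl fun j hj => ?_
    have hji : j ≠ i := (mem_erase.mp hj).1
    have hvi : (addCell lam i) i = lam i + 1 := Function.update_self _ _ _
    have hvj : (addCell lam i) j = lam j := Function.update_of_ne hji _ _
    rcases lt_or_gt_of_ne hji with hlt | hgt
    · rw [if_pos hlt]
      simp only [hf, hvi, hvj, xs]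
      push_cast
      ring
    · rw [if_neg (not_lt.mpr (le_of_lt hgt))]
      simp only [hf, hvi, hvj, xs]
      push_cast
      ring
  rw [hsplit (addCell lam i), hsplit lam,
    prod_congr rfl hsame, hbij (f (addCell lam i)), hbij (f lam)]
  rw [mul_right_comm, hkey, mul_right_comm]

lemma weyl_addCell {d : ℕ} {lam : Fin d → ℕ} (h : ∀ i j : Fin d, i ≤ j → lam j ≤ lam i)
    (i : Fin d) :
    weylDim d (addCell lam i) = weylDim d lam *
      ((∏ j ∈ univ.erase i, (xs lam i + 1 - xs lam j))
        * (∏ j ∈ univ.erase i, (xs lam i - xs lam j))⁻¹) := by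
  have hne : ∏ j ∈ univ.erase i, (xs lam i - xs lam j) ≠ 0 :=
    prod_ne_zero_iff.mpr fun j hj =>
      sub_ne_zero.mpr fun hc => (mem_erase.mp hj).1 ((xs_inj h hc).symm)
  apply mul_right_cancel₀ hne
  rw [weyl_mul d lam i, mul_assoc, mul_assoc, inv_mul_cancel₀ hne, mul_one]

lemma vanish {d : ℕ} {lam : Fin d → ℕ} (h : ∀ i j : Fin d, i ≤ j → lam j ≤ lam i)
    {i : Fin d} (hi : i ∉ AC d lam) :
    ∏ j ∈ univ.erase i, (xs lam i + 1 - xs lam j) = 0 := by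
  simp only [AC, mem_filter, mem_univ, true_and, not_forall] at hi
  obtain ⟨j, hji, hle⟩ := hi
  push_neg at hle
  have hji' : j < i := hji
  have heq : lam j = lam i := le_antisymm hle (h j i (le_of_lt hji'))
  have hipos : 0 < i.1 := lt_of_le_of_lt (Nat.zero_le _) hji'
  have hkd : i.1 - 1 < d := lt_of_le_of_lt (Nat.sub_le _ _) i.2
  set k : Fin d := ⟨i.1 - 1, hkd⟩ with hk
  have hki : k < i := by
    rw [hk, Fin.lt_def]; show i.1 - 1 < i.1; omega
  have hjk : j ≤ k := by
    have h2 := hji'; rw [Fin.lt_def] at h2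
    rw [hk, Fin.le_def]; show j.1 ≤ i.1 - 1; omega
  have hlamk : lam k = lam i := le_antisymm (heq ▸ h j k hjk) (h k i (le_of_lt hki))
  have hxk : xs lam i + 1 - xs lam k = 0 := by
    simp only [xs, hlamk]
    show (lam i : ℚ) - (i.1 : ℚ) + 1 - ((lam i : ℚ) - ((i.1 - 1 : ℕ) : ℚ)) = 0
    have : ((i.1 - 1 : ℕ) : ℚ) = (i.1 : ℚ) - 1 := by
      have : (1 : ℕ) ≤ i.1 := hipos
      push_cast [Nat.cast_sub this]
      ring
    rw [this]; ring
  exact prod_eq_zero (mem_erase.mpr ⟨ne_of_lt hki, mem_univ _⟩) hxk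

lemma sum_addCell {d : ℕ} (hd : 0 < d) {lam : Fin d → ℕ}
    (h : ∀ i j : Fin d, i ≤ j → lam j ≤ lam i) :
    ∑ i ∈ AC d lam, weylDim d (addCell lam i) = d * weylDim d lam := by
  rw [sum_congr rfl fun i _ => weyl_addCell h i]
  rw [sum_subset (subset_univ (AC d lam)) (fun i _ hi => by rw [vanish h hi, zero_mul, mul_zero])]
  rw [← mul_sum, key_sum hd (xs lam) (xs_inj h), mul_comm]

lemma mem_Ptn_of {d N : ℕ} {lam : Fin d → ℕ}
    (h1 : ∀ i j : Fin d, i ≤ j → lam j ≤ lam i) (h2 : ∑ i, lam i = N) :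
    lam ∈ Ptn d N := by
  refine mem_filter.mpr ⟨?_, h1, h2⟩
  refine Fintype.mem_piFinset.mpr fun j => mem_range.mpr ?_
  have : lam j ≤ ∑ i, lam i := Finset.single_le_sum (fun _ _ => Nat.zero_le _) (mem_univ j)
  omega

lemma Ptn_mono {d N : ℕ} {lam : Fin d → ℕ} (h : lam ∈ Ptn d N) :
    ∀ i j : Fin d, i ≤ j → lam j ≤ lam i := (mem_filter.mp h).2.1

lemma Ptn_sum {d N : ℕ} {lam : Fin d → ℕ} (h : lam ∈ Ptn d N) : ∑ i, lam i = N :=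
  (mem_filter.mp h).2.2

lemma mem_RC {d : ℕ} {lam : Fin d → ℕ} {i : Fin d} :
    i ∈ RC d lam ↔ 0 < lam i ∧ ∀ j : Fin d, i < j → lam j < lam i := by
  simp [RC]

lemma mem_AC {d : ℕ} {lam : Fin d → ℕ} {i : Fin d} :
    i ∈ AC d lam ↔ ∀ j : Fin d, j < i → lam i < lam j := by
  simp [AC]

lemma removeCell_mem_Ptn {d N : ℕ} {lam : Fin d → ℕ} (h : lam ∈ Ptn d (N + 1))
    {i : Fin d} (hi : i ∈ RC d lam) : removeCell lam i ∈ Ptn d N := by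
  obtain ⟨hpos, hlt⟩ := mem_RC.mp hi
  have hmono := Ptn_mono h
  refine mem_Ptn_of ?_ ?_
  · intro a b hab
    unfold removeCell
    by_cases ha : a = i
    · by_cases hb : b = i
      · rw [ha, hb]
      · rw [ha, Function.update_self, Function.update_of_ne hb]
        have : i < b := lt_of_le_of_ne (ha ▸ hab) (Ne.symm hb)
        have := hlt b this
        omega
    · by_cases hb : b = i
      · rw [Function.update_of_ne ha, hb, Function.update_self]
        have : lam i ≤ lam a := hmono a i (hb ▸ hab)
        omega
      · rw [Function.update_of_ne ha, Function.update_of_ne hb]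
        exact hmono a b hab
  · have hsum := Ptn_sum h
    unfold removeCell
    rw [Finset.sum_update_of_mem (mem_univ i), sdiff_singleton_eq_erase]
    rw [← Finset.sum_erase_add _ _ (mem_univ i)] at hsum
    omega

lemma AC_removeCell {d : ℕ} {lam : Fin d → ℕ}
    (hmono : ∀ i j : Fin d, i ≤ j → lam j ≤ lam i)
    {i : Fin d} (hi : i ∈ RC d lam) : i ∈ AC d (removeCell lam i) := by
  obtain ⟨hpos, _⟩ := mem_RC.mp hi
  refine mem_AC.mpr fun j hj => ?_
  unfold removeCell
  rw [Function.update_self, Function.update_of_ne (ne_of_lt hj)]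
  have := hmono j i (le_of_lt hj)
  omega

lemma addCell_mem_Ptn {d N : ℕ} {mu : Fin d → ℕ} (h : mu ∈ Ptn d N)
    {i : Fin d} (hi : i ∈ AC d mu) : addCell mu i ∈ Ptn d (N + 1) := by
  have hlt := mem_AC.mp hi
  have hmono := Ptn_mono h
  refine mem_Ptn_of ?_ ?_
  · intro a b hab
    unfold addCell
    by_cases ha : a = i
    · by_cases hb : b = i
      · rw [ha, hb]
      · rw [ha, Function.update_self, Function.update_of_ne hb]
        have : i < b := lt_of_le_of_ne (ha ▸ hab) (Ne.symm hb)
        have := hmono i b (le_of_lt this)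
        omega
    · by_cases hb : b = i
      · rw [Function.update_of_ne ha, hb, Function.update_self]
        have : a < i := lt_of_le_of_ne (hb ▸ hab) ha
        have := hlt a this
        omega
      · rw [Function.update_of_ne ha, Function.update_of_ne hb]
        exact hmono a b hab
  · have hsum := Ptn_sum h
    unfold addCell
    rw [Finset.sum_update_of_mem (mem_univ i), sdiff_singleton_eq_erase]
    rw [← Finset.sum_erase_add _ _ (mem_univ i)] at hsum
    omega

lemma RC_addCell {d : ℕ} {mu : Fin d → ℕ}
    (hmono : ∀ i j : Fin d, i ≤ j → mu j ≤ mu i)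
    {i : Fin d} (hi : i ∈ AC d mu) : i ∈ RC d (addCell mu i) := by
  refine mem_RC.mpr ⟨?_, fun j hj => ?_⟩
  · unfold addCell; rw [Function.update_self]; omega
  · unfold addCell
    rw [Function.update_self, Function.update_of_ne (ne_of_gt hj)]
    have := hmono i j (le_of_lt hj)
    omega

lemma addCell_removeCell {d : ℕ} {lam : Fin d → ℕ} {i : Fin d} (hpos : 0 < lam i) :
    addCell (removeCell lam i) i = lam := by
  unfold addCell removeCell
  rw [Function.update_self, Function.update_idem]
  have : lam i - 1 + 1 = lam i := by omega
  rw [this, Function.update_eq_self]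

lemma removeCell_addCell {d : ℕ} {mu : Fin d → ℕ} {i : Fin d} :
    removeCell (addCell mu i) i = mu := by
  unfold addCell removeCell
  rw [Function.update_self, Function.update_idem]
  have : mu i + 1 - 1 = mu i := by omega
  rw [this, Function.update_eq_self]

lemma syt_eq_sum {d N : ℕ} {lam : Fin d → ℕ} (h : lam ∈ Ptn d (N + 1)) :
    (syt lam : ℚ) = ∑ i ∈ RC d lam, (syt (removeCell lam i) : ℚ) := by
  have hsum := Ptn_sum h
  unfold syt
  rw [hsum]
  show ((∑ i ∈ RC d lam, sytAux d N (removeCell lam i) : ℕ) : ℚ) = _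
  push_cast
  refine Finset.sum_congr rfl fun i hi => ?_
  congr 1
  have := Ptn_sum (removeCell_mem_Ptn h hi)
  rw [this]

end SWaux

/-- Schur–Weyl dimension identity: `∑_{λ⊢_d N} m_λ d_λ = d^N`. -/
theorem stmt10 (d N : ℕ) (hd : 1 ≤ d) :
    ∑ lam ∈ PBT.Ptn d N, PBT.weylDim d lam * (PBT.syt lam : ℚ) = (d : ℚ) ^ N := by
  induction N with
  | zero =>
    have h0 : PBT.Ptn d 0 = {fun _ => 0} := by
      ext lam
      simp only [Finset.mem_singleton]
      constructor
      · intro h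
        funext i
        have hs := SWaux.Ptn_sum h
        have : lam i ≤ ∑ j, lam j :=
          Finset.single_le_sum (fun _ _ => Nat.zero_le _) (mem_univ i)
        omega
      · rintro rfl
        exact SWaux.mem_Ptn_of (fun _ _ _ => le_refl 0) (by simp)
    rw [h0, Finset.sum_singleton]
    have hW : PBT.weylDim d (fun _ => 0) = 1 := by
      unfold PBT.weylDim
      refine Finset.prod_eq_one fun p hp => ?_
      have hlt : p.1 < p.2 := (mem_filter.mp hp).2
      have hq : (p.1.1 : ℚ) < p.2.1 := by exact_mod_cast hlt
      rw [div_eq_one_iff_eq (by linarith)]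
      push_cast
      ring
    have hsyt : PBT.syt (fun _ : Fin d => (0 : ℕ)) = 1 := by
      unfold PBT.syt
      simp [PBT.sytAux]
    rw [hW, hsyt]
    norm_num
  | succ N ih =>
    have hd0 : 0 < d := hd
    calc ∑ lam ∈ PBT.Ptn d (N + 1), PBT.weylDim d lam * (PBT.syt lam : ℚ)
        = ∑ lam ∈ PBT.Ptn d (N + 1), ∑ i ∈ PBT.RC d lam,
            PBT.weylDim d lam * (PBT.syt (PBT.removeCell lam i) : ℚ) := by
          refine Finset.sum_congr rfl fun lam hlam => ?_
          rw [SWaux.syt_eq_sum hlam, Finset.mul_sum]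
      _ = ∑ mu ∈ PBT.Ptn d N, ∑ i ∈ PBT.AC d mu,
            PBT.weylDim d (PBT.addCell mu i) * (PBT.syt mu : ℚ) := by
          rw [Finset.sum_sigma', Finset.sum_sigma']
          refine Finset.sum_nbij'
            (fun q => (⟨PBT.removeCell q.1 q.2, q.2⟩ : (_ : Fin d → ℕ) × Fin d))
            (fun q => (⟨PBT.addCell q.1 q.2, q.2⟩ : (_ : Fin d → ℕ) × Fin d))
            ?_ ?_ ?_ ?_ ?_
          · rintro ⟨lam, i⟩ hq
            rw [Finset.mem_sigma] at hq ⊢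
            exact ⟨SWaux.removeCell_mem_Ptn hq.1 hq.2,
              SWaux.AC_removeCell (SWaux.Ptn_mono hq.1) hq.2⟩
          · rintro ⟨mu, i⟩ hq
            rw [Finset.mem_sigma] at hq ⊢
            exact ⟨SWaux.addCell_mem_Ptn hq.1 hq.2,
              SWaux.RC_addCell (SWaux.Ptn_mono hq.1) hq.2⟩
          · rintro ⟨lam, i⟩ hq
            rw [Finset.mem_sigma] at hq
            have hpos : 0 < lam i := (SWaux.mem_RC.mp hq.2).1
            exact Sigma.ext (SWaux.addCell_removeCell hpos) (HEq.rfl)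
          · rintro ⟨mu, i⟩ hq
            exact Sigma.ext (SWaux.removeCell_addCell) (HEq.rfl)
          · rintro ⟨lam, i⟩ hq
            rw [Finset.mem_sigma] at hq
            have hpos : 0 < lam i := (SWaux.mem_RC.mp hq.2).1
            dsimp only
            rw [SWaux.addCell_removeCell hpos]
      _ = ∑ mu ∈ PBT.Ptn d N, (PBT.syt mu : ℚ)
            * ∑ i ∈ PBT.AC d mu, PBT.weylDim d (PBT.addCell mu i) := by
          refine Finset.sum_congr rfl fun mu _ => ?_
          rw [Finset.mul_sum]
          refine Finset.sum_congr rfl fun i _ => mul_comm _ _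
      _ = ∑ mu ∈ PBT.Ptn d N, (PBT.syt mu : ℚ) * (d * PBT.weylDim d mu) := by
          refine Finset.sum_congr rfl fun mu hmu => ?_
          rw [SWaux.sum_addCell hd0 (SWaux.Ptn_mono hmu)]
      _ = (d : ℚ) * ∑ lam ∈ PBT.Ptn d N, PBT.weylDim d lam * (PBT.syt lam : ℚ) := by
          rw [Finset.mul_sum]
          exact Finset.sum_congr rfl fun mu _ => by ring
      _ = (d : ℚ) ^ (N + 1) := by rw [ih]; ring
end
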